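/- arXiv:2405.09992 — 8 statements merged into one kernel-verified Lean document; each statement's English description precedes it below -/
import Mathlib

section
/- Define F(q) = ∫_1^3 φ(u) du − ∫_{1+q/s}^{3+q/s} φ(u) du for a fixed s > 0, where φ is the standard normal density. Then for all 0 ≤ q ≤ s, F(q) ≥ min(F(s), s·F'(0)) · (q/s), and moreover min(∫_1^3 φ(u)du − ∫_2^4 φ(u)du, (1/√(2π))(e^{-1/2} − e^{-9/2})) ≥ 1/8, so F(q) ≥ q/(8s). -/
open MeasureTheory intervalIntegral

noncomputable def phiR : ℝ → ℝ := fun u => (Real.sqrt (2 * Real.pi))⁻¹ * Real.exp (-u ^ 2 / 2)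

lemma phiR_cont : Continuous phiR := by
  unfold phiR
  exact continuous_const.mul ((continuous_neg.comp (continuous_pow 2)).div_const 2).rexp

lemma phiR_int (a b : ℝ) : IntervalIntegrable phiR volume a b :=
  phiR_cont.intervalIntegrable a b

lemma sqrt2pi_pos : 0 < Real.sqrt (2 * Real.pi) :=
  Real.sqrt_pos.2 (by positivity)

lemma phiR_anti {u v : ℝ} (hu : 0 ≤ u) (huv : u ≤ v) : phiR v ≤ phiR u := by
  unfold phiR
  have h : -v ^ 2 / 2 ≤ -u ^ 2 / 2 := by nlinarith
  exact mul_le_mul_of_nonneg_left (Real.exp_le_exp.2 h) (inv_nonneg.2 (Real.sqrt_nonneg _))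

lemma phiR_hasDeriv (c u : ℝ) :
    HasDerivAt (fun x => phiR (c + x)) (phiR (c + u) * (-(c + u))) u := by
  have h1 : HasDerivAt (fun x : ℝ => c + x) 1 u := (hasDerivAt_id u).const_add c
  have h2 : HasDerivAt (fun x : ℝ => -(c + x) ^ 2 / 2) (-(c + u)) u := by
    have := ((h1.pow 2).neg.div_const 2)
    refine this.congr_deriv ?_
    simp
    ring
  have h4 := h2.exp.const_mul (Real.sqrt (2 * Real.pi))⁻¹
  unfold phiR
  refine h4.congr_deriv ?_
  ring

lemma g_anti : AntitoneOn (fun u => phiR (1 + u) - phiR (3 + u)) (Set.Icc (0:ℝ) 1) := by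
  have hcont : Continuous (fun u => phiR (1 + u) - phiR (3 + u)) :=
    (phiR_cont.comp (continuous_const.add continuous_id)).sub
      (phiR_cont.comp (continuous_const.add continuous_id))
  apply antitoneOn_of_deriv_nonpos (convex_Icc 0 1) hcont.continuousOn
  · intro x _
    exact ((phiR_hasDeriv 1 x).sub (phiR_hasDeriv 3 x)).differentiableAt.differentiableWithinAt
  · intro x hx
    rw [interior_Icc] at hx
    have hd := ((phiR_hasDeriv 1 x).sub (phiR_hasDeriv 3 x)).deriv
    rw [show (fun u => phiR (1 + u) - phiR (3 + u)) = ((fun x => phiR (1 + x)) - fun x => phiR (3 + x)) from rfl, hd]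
    have hx0 : (0:ℝ) ≤ x := hx.1.le
    have e1 : Real.exp (-(3 + x) ^ 2 / 2) =
        Real.exp (-(1 + x) ^ 2 / 2) * Real.exp (-(2 * x + 4)) := by
      rw [← Real.exp_add]; ring_nf
    have e2 : Real.exp (-(2 * x + 4)) ≤ 1/3 := by
      rw [Real.exp_neg]
      have h5 : (3:ℝ) ≤ Real.exp (2 * x + 4) := by
        have := Real.add_one_le_exp (2 * x + 4)
        linarith
      rw [inv_le_comm₀ (lt_of_lt_of_le (by norm_num) h5) (by norm_num)]
      linarith
    have hK : (0:ℝ) ≤ (Real.sqrt (2 * Real.pi))⁻¹ := inv_nonneg.2 (Real.sqrt_nonneg _)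
    have hEA := (Real.exp_pos (-(1 + x) ^ 2 / 2)).le
    have key : (3 + x) * Real.exp (-(3 + x) ^ 2 / 2) ≤ (1 + x) * Real.exp (-(1 + x) ^ 2 / 2) := by
      rw [e1]
      have h6 := mul_le_mul_of_nonneg_left e2
        (mul_nonneg (by linarith : (0:ℝ) ≤ 3 + x) hEA)
      nlinarith [mul_nonneg hx0 hEA]
    unfold phiR
    nlinarith

lemma g_cont : Continuous (fun u => phiR (1 + u) - phiR (3 + u)) :=
  (phiR_cont.comp (continuous_const.add continuous_id)).sub
    (phiR_cont.comp (continuous_const.add continuous_id))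

lemma g_int (a b : ℝ) : IntervalIntegrable (fun u => phiR (1 + u) - phiR (3 + u)) volume a b :=
  g_cont.intervalIntegrable a b

/-- `∫_0^1 g * t ≤ ∫_0^t g` for `t ∈ [0,1]`. -/
lemma key_lower {t : ℝ} (h0 : 0 ≤ t) (h1 : t ≤ 1) :
    (∫ u in (0:ℝ)..1, (phiR (1 + u) - phiR (3 + u))) * t
      ≤ ∫ u in (0:ℝ)..t, (phiR (1 + u) - phiR (3 + u)) := by
  set g : ℝ → ℝ := fun u => phiR (1 + u) - phiR (3 + u) with hg
  have htmem : t ∈ Set.Icc (0:ℝ) 1 := ⟨h0, h1⟩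
  have hc : 0 ≤ g t := sub_nonneg.2 (phiR_anti (by linarith) (by linarith))
  have hA : t * g t ≤ ∫ u in (0:ℝ)..t, g u := by
    have := intervalIntegral.integral_mono_on (μ := volume) (f := fun _ => g t) (g := g) h0
      (intervalIntegrable_const) (g_int 0 t)
      (fun x hx => g_anti ⟨hx.1, hx.2.trans h1⟩ htmem hx.2)
    simp only [intervalIntegral.integral_const, smul_eq_mul, sub_zero, hg] at this ⊢
    nlinarith [this]
  have hB : (∫ u in t..(1:ℝ), g u) ≤ (1 - t) * g t := by
    have := intervalIntegral.integral_mono_on (μ := volume) (f := g) (g := fun _ => g t) h1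
      (g_int t 1) (intervalIntegrable_const)
      (fun x hx => g_anti htmem ⟨h0.trans hx.1, hx.2⟩ hx.1)
    simp only [intervalIntegral.integral_const, smul_eq_mul, hg] at this ⊢
    nlinarith [this]
  have hsplit : (∫ u in (0:ℝ)..t, g u) + ∫ u in t..(1:ℝ), g u = ∫ u in (0:ℝ)..1, g u :=
    intervalIntegral.integral_add_adjacent_intervals (g_int 0 t) (g_int t 1)
  nlinarith [hA, hB, hsplit, mul_nonneg h0 hc, mul_nonneg (sub_nonneg.2 h1) hc]

/-- rewrite `F` at shift `t`. -/
lemma F_eq (t : ℝ) :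
    (∫ u in (1:ℝ)..3, phiR u) - ∫ u in (1 + t)..(3 + t), phiR u
      = ∫ u in (0:ℝ)..t, (phiR (1 + u) - phiR (3 + u)) := by
  have A := intervalIntegral.integral_add_adjacent_intervals
    (phiR_int 1 (1 + t)) (phiR_int (1 + t) 3)
  have B := intervalIntegral.integral_add_adjacent_intervals
    (phiR_int (1 + t) 3) (phiR_int 3 (3 + t))
  have C1 : (∫ u in (0:ℝ)..t, phiR (1 + u)) = ∫ u in (1:ℝ)..(1 + t), phiR u := by
    rw [intervalIntegral.integral_comp_add_left phiR 1, add_zero]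
  have C2 : (∫ u in (0:ℝ)..t, phiR (3 + u)) = ∫ u in (3:ℝ)..(3 + t), phiR u := by
    rw [intervalIntegral.integral_comp_add_left phiR 3, add_zero]
  have D : (∫ u in (0:ℝ)..t, (phiR (1 + u) - phiR (3 + u)))
      = (∫ u in (0:ℝ)..t, phiR (1 + u)) - ∫ u in (0:ℝ)..t, phiR (3 + u) :=
    intervalIntegral.integral_sub
      ((phiR_cont.comp (continuous_const.add continuous_id)).intervalIntegrable 0 t)
      ((phiR_cont.comp (continuous_const.add continuous_id)).intervalIntegrable 0 t)
  rw [D, C1, C2]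
  linarith

/-! ### numeric bounds -/

lemma expb1 : Real.exp ((25:ℝ)/32) ≤ 2.1844 := by
  have h := Real.exp_bound' (x := (25:ℝ)/32) (by norm_num) (by norm_num) (n := 5) (by norm_num)
  norm_num [Finset.sum_range_succ, Nat.factorial] at h
  linarith

lemma expb2 : Real.exp ((3:ℝ)/4) ≤ 2.1172 := by
  have h := Real.exp_bound' (x := (3:ℝ)/4) (by norm_num) (by norm_num) (n := 5) (by norm_num)
  norm_num [Finset.sum_range_succ, Nat.factorial] at h
  linarith

lemma expb3 : Real.exp ((1:ℝ)/2) ≤ 1.6491 := by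
  have h := Real.exp_bound' (x := (1:ℝ)/2) (by norm_num) (by norm_num) (n := 5) (by norm_num)
  norm_num [Finset.sum_range_succ, Nat.factorial] at h
  linarith

lemma exphalf_lb : (1.648:ℝ) ≤ Real.exp ((1:ℝ)/2) := by
  have h1 : Real.exp ((1:ℝ)/2) * Real.exp ((1:ℝ)/2) = Real.exp 1 := by
    rw [← Real.exp_add]; norm_num
  have h2 := Real.exp_one_gt_d9
  have h3 := Real.exp_pos ((1:ℝ)/2)
  nlinarith

lemma exp92_lb : (89:ℝ) ≤ Real.exp ((9:ℝ)/2) := by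
  have h1 : Real.exp ((9:ℝ)/2) = Real.exp ((1:ℝ)/2) ^ 9 := by
    rw [← Real.exp_nat_mul]; norm_num
  rw [h1]
  calc (89:ℝ) ≤ 1.648 ^ 9 := by norm_num
  _ ≤ Real.exp ((1:ℝ)/2) ^ 9 := pow_le_pow_left₀ (by norm_num) exphalf_lb 9

lemma sqrt2pi_le : Real.sqrt (2 * Real.pi) ≤ 2.51 := by
  rw [show (2.51:ℝ) = Real.sqrt (2.51^2) by rw [Real.sqrt_sq]; norm_num]
  apply Real.sqrt_le_sqrt
  nlinarith [Real.pi_lt_d2]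

lemma exp_neg_lb {c B : ℝ} (hB : 0 < B) (h : Real.exp c ≤ B) : B⁻¹ ≤ Real.exp (-c) := by
  rw [Real.exp_neg]
  exact inv_anti₀ (Real.exp_pos c) h

/-- pointwise tangent-quadratic lower bound for the Gaussian. -/
lemma phiR_quad_lb (c x : ℝ) :
    (Real.sqrt (2 * Real.pi))⁻¹ * (Real.exp (-c) * (1 + c - x ^ 2 / 2)) ≤ phiR x := by
  unfold phiR
  have hK : (0:ℝ) ≤ (Real.sqrt (2 * Real.pi))⁻¹ := inv_nonneg.2 (Real.sqrt_nonneg _)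
  have h := Real.add_one_le_exp (c - x ^ 2 / 2)
  have e : Real.exp (-c) * Real.exp (c - x ^ 2 / 2) = Real.exp (-x ^ 2 / 2) := by
    rw [← Real.exp_add]; ring_nf
  have hE := (Real.exp_pos (-c)).le
  nlinarith [mul_le_mul_of_nonneg_left h hE]

lemma poly_int (a b C : ℝ) :
    (∫ x in a..b, (C - x ^ 2 / 2)) = C * (b - a) - (b ^ 3 - a ^ 3) / 6 := by
  rw [intervalIntegral.integral_sub intervalIntegrable_const
    (((continuous_pow 2).div_const 2).intervalIntegrable a b),
    intervalIntegral.integral_div, integral_pow, intervalIntegral.integral_const]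
  simp only [smul_eq_mul]
  push_cast
  ring

lemma quad_piece_lb (a b c A : ℝ) (hab : a ≤ b)
    (hA : (1 + c) * (b - a) - (b ^ 3 - a ^ 3) / 6 = A) :
    (Real.sqrt (2 * Real.pi))⁻¹ * (Real.exp (-c) * A)
      ≤ ∫ x in a..b, phiR x := by
  subst hA
  have hcont : Continuous fun x : ℝ =>
      (Real.sqrt (2 * Real.pi))⁻¹ * (Real.exp (-c) * (1 + c - x ^ 2 / 2)) := by
    continuity
  have hmono := intervalIntegral.integral_mono_on (μ := volume)
    (f := fun x : ℝ => (Real.sqrt (2 * Real.pi))⁻¹ * (Real.exp (-c) * (1 + c - x ^ 2 / 2)))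
    (g := phiR) hab (hcont.intervalIntegrable a b) (phiR_int a b)
    (fun x _ => phiR_quad_lb c x)
  have hval : (∫ x in a..b, (Real.sqrt (2 * Real.pi))⁻¹ * (Real.exp (-c) * (1 + c - x ^ 2 / 2)))
      = (Real.sqrt (2 * Real.pi))⁻¹ * (Real.exp (-c) * ((1 + c) * (b - a) - (b ^ 3 - a ^ 3) / 6)) := by
    rw [intervalIntegral.integral_const_mul, intervalIntegral.integral_const_mul, poly_int]
  rw [hval] at hmono
  exact hmono

lemma inv_bound {S X : ℝ} (hS0 : 0 < S) (h : 1/8 * S ≤ X) : (1/8:ℝ) ≤ S⁻¹ * X := by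
  calc (1/8:ℝ) = S⁻¹ * (1/8 * S) := by field_simp
  _ ≤ S⁻¹ * X := mul_le_mul_of_nonneg_left h (inv_nonneg.2 hS0.le)

lemma intA : (1/8:ℝ) ≤ (∫ u in (1:ℝ)..3, phiR u) - ∫ u in (2:ℝ)..4, phiR u := by
  have hsplit13 := intervalIntegral.integral_add_adjacent_intervals (phiR_int 1 2) (phiR_int 2 3)
  have hsplit24 := intervalIntegral.integral_add_adjacent_intervals (phiR_int 2 3) (phiR_int 3 4)
  -- upper bound for ∫_3^4
  have hup : (∫ u in (3:ℝ)..4, phiR u) ≤ (Real.sqrt (2 * Real.pi))⁻¹ * Real.exp (-(9:ℝ)/2) := by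
    have h3 : phiR 3 = (Real.sqrt (2 * Real.pi))⁻¹ * Real.exp (-(9:ℝ)/2) := by
      unfold phiR; norm_num
    have h2 := intervalIntegral.integral_mono_on (μ := volume) (f := phiR)
      (g := fun _ => phiR 3) (by norm_num : (3:ℝ) ≤ 4) (phiR_int 3 4)
      intervalIntegrable_const (fun x hx => phiR_anti (by norm_num) hx.1)
    rw [intervalIntegral.integral_const, smul_eq_mul] at h2
    rw [← h3]
    linarith
  -- lower bounds for ∫_1^{3/2} and ∫_{3/2}^2
  have hl1 := quad_piece_lb 1 (3/2) (25/32) (95/192) (by norm_num) (by norm_num)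
  have hl2 := quad_piece_lb (3/2) 2 (49/32) (95/192) (by norm_num) (by norm_num)
  -- assemble
  have hsum : (∫ u in (1:ℝ)..2, phiR u) =
      (∫ u in (1:ℝ)..(3/2:ℝ), phiR u) + ∫ u in (3/2:ℝ)..2, phiR u :=
    (intervalIntegral.integral_add_adjacent_intervals (phiR_int 1 (3/2)) (phiR_int (3/2) 2)).symm
  -- numeric estimates
  have hx1 : (0.4577:ℝ) ≤ Real.exp (-(25/32:ℝ)) := by
    have := exp_neg_lb (by norm_num : (0:ℝ) < 2.1844) expb1
    have h' : ((2.1844:ℝ))⁻¹ ≥ 0.4577 := by norm_num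
    linarith
  have hx2 : (0.2162:ℝ) ≤ Real.exp (-(49/32:ℝ)) := by
    have hmul : Real.exp ((49:ℝ)/32) = Real.exp ((25:ℝ)/32) * Real.exp ((3:ℝ)/4) := by
      rw [← Real.exp_add]; norm_num
    have hb : Real.exp ((49:ℝ)/32) ≤ 4.6249 := by
      rw [hmul]
      have h1 := Real.exp_pos ((25:ℝ)/32)
      have h2 := Real.exp_pos ((3:ℝ)/4)
      nlinarith [expb1, expb2]
    have := exp_neg_lb (by norm_num : (0:ℝ) < 4.6249) hb
    have h' : ((4.6249:ℝ))⁻¹ ≥ 0.2162 := by norm_num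
    linarith
  have hx3 : Real.exp (-(9:ℝ)/2) ≤ 1/89 := by
    have h1 : Real.exp (-(9:ℝ)/2) = (Real.exp ((9:ℝ)/2))⁻¹ := by
      rw [← Real.exp_neg]; norm_num
    rw [h1]
    rw [inv_le_comm₀ (Real.exp_pos _) (by norm_num)]
    calc (1/89:ℝ)⁻¹ = 89 := by norm_num
    _ ≤ Real.exp ((9:ℝ)/2) := exp92_lb
  -- final arithmetic
  have hK : (0:ℝ) < (Real.sqrt (2 * Real.pi))⁻¹ := inv_pos.2 sqrt2pi_pos
  have hS := sqrt2pi_le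
  have hS0 := sqrt2pi_pos
  have goal2 : (1/8:ℝ) ≤ (∫ u in (1:ℝ)..2, phiR u) - ∫ u in (3:ℝ)..4, phiR u := by
    rw [hsum]
    have hKS : (1/8:ℝ) * Real.sqrt (2 * Real.pi) ≤
        Real.exp (-(25/32:ℝ)) * (95/192) + Real.exp (-(49/32:ℝ)) * (95/192)
          - Real.exp (-(9:ℝ)/2) := by
      nlinarith
    have hfin : (1/8:ℝ) ≤ (Real.sqrt (2 * Real.pi))⁻¹ *
        (Real.exp (-(25/32:ℝ)) * (95/192) + Real.exp (-(49/32:ℝ)) * (95/192)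
          - Real.exp (-(9:ℝ)/2)) := inv_bound hS0 hKS
    nlinarith [hl1, hl2, hup, hfin, hK.le]
  linarith

lemma intB : (1/8:ℝ) ≤ (Real.sqrt (2 * Real.pi))⁻¹ *
    (Real.exp (-(1:ℝ)/2) - Real.exp (-(9:ℝ)/2)) := by
  have hx1 : (0.6063:ℝ) ≤ Real.exp (-(1:ℝ)/2) := by
    have h0 : Real.exp (-(1:ℝ)/2) = Real.exp (-(1/2:ℝ)) := by norm_num
    rw [h0]
    have := exp_neg_lb (by norm_num : (0:ℝ) < 1.6491) expb3
    have h' : ((1.6491:ℝ))⁻¹ ≥ 0.6063 := by norm_num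
    linarith
  have hx3 : Real.exp (-(9:ℝ)/2) ≤ 1/89 := by
    have h1 : Real.exp (-(9:ℝ)/2) = (Real.exp ((9:ℝ)/2))⁻¹ := by
      rw [← Real.exp_neg]; norm_num
    rw [h1, inv_le_comm₀ (Real.exp_pos _) (by norm_num)]
    calc (1/89:ℝ)⁻¹ = 89 := by norm_num
    _ ≤ Real.exp ((9:ℝ)/2) := exp92_lb
  have hS := sqrt2pi_le
  have hS0 := sqrt2pi_pos
  have hKS : (1/8:ℝ) * Real.sqrt (2 * Real.pi) ≤
      Real.exp (-(1:ℝ)/2) - Real.exp (-(9:ℝ)/2) := by nlinarith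
  exact inv_bound hS0 hKS

/-- Lower bound on the coupling-probability function
`F(q) = ∫_1^3 φ − ∫_{1+q/s}^{3+q/s} φ`. -/
theorem stmt3 (s : ℝ) (hs : 0 < s) :
    let φ : ℝ → ℝ := fun u => (Real.sqrt (2 * Real.pi))⁻¹ * Real.exp (-u ^ 2 / 2)
    let F : ℝ → ℝ := fun q => (∫ u in (1:ℝ)..3, φ u) - ∫ u in (1 + q / s)..(3 + q / s), φ u
    (∀ q, 0 ≤ q → q ≤ s → min (F s) (s * deriv F 0) * (q / s) ≤ F q) ∧
    (1 / 8 : ℝ) ≤ min ((∫ u in (1:ℝ)..3, φ u) - ∫ u in (2:ℝ)..4, φ u)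
      ((Real.sqrt (2 * Real.pi))⁻¹ * (Real.exp (-(1:ℝ) / 2) - Real.exp (-(9:ℝ) / 2))) ∧
    (∀ q, 0 ≤ q → q ≤ s → q / (8 * s) ≤ F q) := by
  intro φ F
  have hφ : φ = phiR := rfl
  have hFdef : ∀ q, F q = (∫ u in (1:ℝ)..3, phiR u) - ∫ u in (1 + q/s)..(3 + q/s), phiR u :=
    fun q => rfl
  have h24 : (∫ u in (1:ℝ)..3, phiR u) - ∫ u in (2:ℝ)..4, phiR u
      = ∫ u in (0:ℝ)..1, (phiR (1 + u) - phiR (3 + u)) := by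
    have := F_eq 1
    norm_num at this
    convert this using 3 <;> norm_num
  have hFs : F s = (∫ u in (1:ℝ)..3, phiR u) - ∫ u in (2:ℝ)..4, phiR u := by
    rw [hFdef, div_self hs.ne']
    norm_num
  have core : ∀ q, 0 ≤ q → q ≤ s →
      ((∫ u in (1:ℝ)..3, phiR u) - ∫ u in (2:ℝ)..4, phiR u) * (q/s) ≤ F q := by
    intro q hq hqs
    have ht0 : 0 ≤ q/s := div_nonneg hq hs.le
    have ht1 : q/s ≤ 1 := (div_le_one hs).2 hqs
    rw [hFdef, F_eq (q/s), h24]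
    exact key_lower ht0 ht1
  refine ⟨?_, ?_, ?_⟩
  · intro q hq hqs
    have h1 := core q hq hqs
    have hmin : min (F s) (s * deriv F 0) ≤ F s := min_le_left _ _
    have h2 := mul_le_mul_of_nonneg_right hmin (div_nonneg hq hs.le)
    have h3 : F s * (q/s) ≤ F q := by rw [hFs]; exact h1
    exact h2.trans h3
  · rw [show (fun u => φ u) = phiR from hφ]
    exact le_min intA intB
  · intro q hq hqs
    have h1 := core q hq hqs
    have h2 := intA
    have ht0 : 0 ≤ q/s := div_nonneg hq hs.le
    have heq : q/(8*s) = (1/8) * (q/s) := by ring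
    rw [heq]
    calc (1/8:ℝ) * (q/s)
        ≤ ((∫ u in (1:ℝ)..3, phiR u) - ∫ u in (2:ℝ)..4, phiR u) * (q/s) :=
          mul_le_mul_of_nonneg_right h2 ht0
    _ ≤ F q := h1
end

section
/- Let f(r) = ∫_0^r φ(s)ψ(s) ds where φ(s) = exp(−A (min(s,R₁))²/2) with A = 128αγ² > 0, Φ(s) = ∫_0^s φ(x)dx, ψ(s) = 1 − (ĉγ/2)∫_0^{min(s,R₁)} Φ(x)φ(x)^{-1} dx, and ĉ = 1/(γ ∫_0^{R₁} Φ(s)φ(s)^{-1} ds). Then ψ(r) ∈ [1/2, 1] for all r ≥ 0, and consequently for all r ≥ 0: f'(R₁)·r ≤ f'(r)·r ≤ f(r) ≤ Φ(r) ≤ r. -/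
open MeasureTheory

/-- Properties of the concave distance-modifying function `f`:
`ψ ∈ [1/2,1]` and `f'(R₁)·r ≤ f'(r)·r ≤ f(r) ≤ Φ(r) ≤ r`. -/
theorem stmt4 (α γ R₁ : ℝ) (hα : 0 < α) (hγ : 0 < γ) (hR : 0 < R₁) :
    let A : ℝ := 128 * α * γ ^ 2
    let φ : ℝ → ℝ := fun s => Real.exp (-A * (min s R₁) ^ 2 / 2)
    let Φ : ℝ → ℝ := fun s => ∫ x in (0:ℝ)..s, φ x
    let chat : ℝ := 1 / (γ * ∫ s in (0:ℝ)..R₁, Φ s / φ s)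
    let ψ : ℝ → ℝ := fun s => 1 - chat * γ / 2 * ∫ x in (0:ℝ)..(min s R₁), Φ x / φ x
    let f : ℝ → ℝ := fun r => ∫ s in (0:ℝ)..r, φ s * ψ s
    ∀ r, 0 ≤ r →
      ψ r ∈ Set.Icc (1/2 : ℝ) 1 ∧
      deriv f R₁ * r ≤ deriv f r * r ∧
      deriv f r * r ≤ f r ∧
      f r ≤ Φ r ∧
      Φ r ≤ r := by
  intro A φ Φ chat ψ f r hr
  have hA : 0 < A := by positivity
  have hφpos : ∀ s, 0 < φ s := fun s => Real.exp_pos _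
  have hφle1 : ∀ s, φ s ≤ 1 := by
    intro s
    have h0 : -A * (min s R₁)^2 / 2 ≤ 0 := by nlinarith [sq_nonneg (min s R₁)]
    exact Real.exp_le_one_iff.mpr h0
  have hφcont : Continuous φ := by
    apply Real.continuous_exp.comp
    fun_prop
  -- φ antitone on [0,∞)
  have hφmono : ∀ s t, 0 ≤ s → s ≤ t → φ t ≤ φ s := by
    intro s t hs hst
    apply Real.exp_le_exp.mpr
    have h1 : min s R₁ ≤ min t R₁ := min_le_min hst le_rfl
    have h2 : 0 ≤ min s R₁ := le_min hs hR.le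
    have h3 : (min s R₁)^2 ≤ (min t R₁)^2 := pow_le_pow_left₀ h2 h1 2
    nlinarith
  set g : ℝ → ℝ := fun x => Φ x / φ x with hgdef
  have hΦcont : Continuous Φ :=
    intervalIntegral.continuous_primitive (fun a b => hφcont.intervalIntegrable a b) 0
  have hgcont : Continuous g := hΦcont.div hφcont (fun x => (hφpos x).ne')
  have hΦnonneg : ∀ x, 0 ≤ x → 0 ≤ Φ x := by
    intro x hx
    exact intervalIntegral.integral_nonneg hx (fun t _ => (hφpos t).le)
  have hgnonneg : ∀ x, 0 ≤ x → 0 ≤ g x := fun x hx =>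
    div_nonneg (hΦnonneg x hx) (hφpos x).le
  have hΦpos : ∀ x, 0 < x → 0 < Φ x := by
    intro x hx
    exact intervalIntegral.intervalIntegral_pos_of_pos
      (hφcont.intervalIntegrable 0 x) hφpos hx
  set I : ℝ := ∫ s in (0:ℝ)..R₁, g s with hIdef
  have hIpos : 0 < I := by
    apply intervalIntegral.intervalIntegral_pos_of_pos_on
      (hgcont.intervalIntegrable 0 R₁) _ hR
    intro x hx
    exact div_pos (hΦpos x hx.1) (hφpos x)
  have hchat : chat * γ = 1 / I := by
    simp only [chat, hIdef]
    field_simp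
    rfl
  -- J s := ∫₀^{min s R₁} g, monotone in s on [0,∞), bounded by I
  have hJle : ∀ s, 0 ≤ s → (∫ x in (0:ℝ)..(min s R₁), g x) ≤ I := by
    intro s hs
    have h1 : min s R₁ ≤ R₁ := min_le_right _ _
    have hsplit : (∫ x in (0:ℝ)..(min s R₁), g x) + (∫ x in (min s R₁)..R₁, g x) = I :=
      intervalIntegral.integral_add_adjacent_intervals (hgcont.intervalIntegrable _ _)
        (hgcont.intervalIntegrable _ _)
    have h2 : 0 ≤ ∫ x in (min s R₁)..R₁, g x := by
      apply intervalIntegral.integral_nonneg h1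
      intro t ht
      exact hgnonneg t (le_trans (le_min hs hR.le) ht.1)
    linarith
  have hJnonneg : ∀ s, 0 ≤ s → 0 ≤ ∫ x in (0:ℝ)..(min s R₁), g x := by
    intro s hs
    apply intervalIntegral.integral_nonneg (le_min hs hR.le)
    intro t ht
    exact hgnonneg t ht.1
  have hJmono : ∀ s t, 0 ≤ s → s ≤ t →
      (∫ x in (0:ℝ)..(min s R₁), g x) ≤ ∫ x in (0:ℝ)..(min t R₁), g x := by
    intro s t hs hst
    have h1 : min s R₁ ≤ min t R₁ := min_le_min hst le_rfl
    have hsplit : (∫ x in (0:ℝ)..(min s R₁), g x) + (∫ x in (min s R₁)..(min t R₁), g x)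
        = ∫ x in (0:ℝ)..(min t R₁), g x :=
      intervalIntegral.integral_add_adjacent_intervals (hgcont.intervalIntegrable _ _)
        (hgcont.intervalIntegrable _ _)
    have h2 : 0 ≤ ∫ x in (min s R₁)..(min t R₁), g x := by
      apply intervalIntegral.integral_nonneg h1
      intro u hu
      exact hgnonneg u (le_trans (le_min hs hR.le) hu.1)
    linarith
  have hψeq : ∀ s, ψ s = 1 - (1 / I) / 2 * ∫ x in (0:ℝ)..(min s R₁), g x := by
    intro s
    simp only [ψ]
    rw [show chat * γ / 2 = (1/I)/2 by rw [hchat]]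
  have hψmem : ∀ s, 0 ≤ s → ψ s ∈ Set.Icc (1/2 : ℝ) 1 := by
    intro s hs
    rw [hψeq]
    constructor
    · have h2 : (1/I)/2 * (∫ x in (0:ℝ)..(min s R₁), g x) ≤ (1/I)/2 * I := by
        apply mul_le_mul_of_nonneg_left (hJle s hs)
        positivity
      have h3 : (1/I)/2 * I = 1/2 := by field_simp
      linarith
    · have h2 : 0 ≤ (1/I)/2 * ∫ x in (0:ℝ)..(min s R₁), g x := by
        have := hJnonneg s hs
        positivity
      linarith
  have hψnonneg : ∀ s, 0 ≤ s → 0 ≤ ψ s := fun s hs => le_trans (by norm_num) (hψmem s hs).1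
  have hψle1 : ∀ s, 0 ≤ s → ψ s ≤ 1 := fun s hs => (hψmem s hs).2
  have hψmono : ∀ s t, 0 ≤ s → s ≤ t → ψ t ≤ ψ s := by
    intro s t hs hst
    rw [hψeq, hψeq]
    have h1 := hJmono s t hs hst
    have hc : 0 ≤ (1/I)/2 := by positivity
    nlinarith
  have hψcont : Continuous ψ := by
    have hG : Continuous (fun u : ℝ => ∫ x in (0:ℝ)..u, g x) :=
      intervalIntegral.continuous_primitive (fun a b => hgcont.intervalIntegrable a b) 0
    exact continuous_const.sub (continuous_const.mul
      (hG.comp (continuous_id.min continuous_const)))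
  have hfψcont : Continuous (fun s => φ s * ψ s) := hφcont.mul hψcont
  have hderiv : ∀ b, deriv f b = φ b * ψ b := fun b =>
    Continuous.deriv_integral _ hfψcont 0 b
  -- product antitone on [0,∞)
  have hprodmono : ∀ s t, 0 ≤ s → s ≤ t → φ t * ψ t ≤ φ s * ψ s := by
    intro s t hs hst
    have ht : 0 ≤ t := hs.trans hst
    exact mul_le_mul (hφmono s t hs hst) (hψmono s t hs hst) (hψnonneg t ht) (hφpos s).le
  refine ⟨hψmem r hr, ?_, ?_, ?_, ?_⟩
  · rw [hderiv, hderiv]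
    apply mul_le_mul_of_nonneg_right _ hr
    rcases le_total r R₁ with h | h
    · exact hprodmono r R₁ hr h
    · exact le_of_eq (by
        have h1 : min r R₁ = R₁ := min_eq_right h
        simp only [φ, ψ, h1, min_self])
  · rw [hderiv]
    have h1 : (∫ s in (0:ℝ)..r, φ r * ψ r) ≤ ∫ s in (0:ℝ)..r, φ s * ψ s := by
      apply intervalIntegral.integral_mono_on hr
        intervalIntegrable_const (hfψcont.intervalIntegrable 0 r)
      intro x hx
      exact hprodmono x r hx.1 hx.2
    have h2 : (∫ s in (0:ℝ)..r, φ r * ψ r) = r * (φ r * ψ r) := by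
      rw [intervalIntegral.integral_const]
      simp [smul_eq_mul]
    calc φ r * ψ r * r = r * (φ r * ψ r) := by ring
      _ ≤ f r := by rw [← h2]; exact h1
  · apply intervalIntegral.integral_mono_on hr (hfψcont.intervalIntegrable 0 r)
      (hφcont.intervalIntegrable 0 r)
    intro x hx
    calc φ x * ψ x ≤ φ x * 1 := mul_le_mul_of_nonneg_left (hψle1 x hx.1) (hφpos x).le
      _ = φ x := mul_one _
  · have h1 : (∫ s in (0:ℝ)..r, φ s) ≤ ∫ s in (0:ℝ)..r, (1:ℝ) := by
      apply intervalIntegral.integral_mono_on hr (hφcont.intervalIntegrable 0 r)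
        intervalIntegrable_const
      intro x _
      exact hφle1 x
    simpa using h1
end

section
/- Let f be defined as f(r) = ∫_0^r φ(s)ψ(s) ds with φ, ψ, ĉ as above. Then for r ∈ [0, R₁), f is twice differentiable and f''(r) = −128αγ² r f'(r) − (ĉγ/2)∫_0^r φ(s) ds ≤ 0; in particular f is concave on [0, R₁). -/
open MeasureTheory intervalIntegral

/-- Second-derivative formula and concavity of `f` on `[0, R₁)`. -/
theorem stmt5 (α γ R₁ : ℝ) (hα : 0 < α) (hγ : 0 < γ) (hR : 0 < R₁) :
    let A : ℝ := 128 * α * γ ^ 2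
    let φ : ℝ → ℝ := fun s => Real.exp (-A * (min s R₁) ^ 2 / 2)
    let Φ : ℝ → ℝ := fun s => ∫ x in (0:ℝ)..s, φ x
    let chat : ℝ := 1 / (γ * ∫ s in (0:ℝ)..R₁, Φ s / φ s)
    let ψ : ℝ → ℝ := fun s => 1 - chat * γ / 2 * ∫ x in (0:ℝ)..(min s R₁), Φ x / φ x
    let f : ℝ → ℝ := fun r => ∫ s in (0:ℝ)..r, φ s * ψ s
    (∀ r ∈ Set.Ico (0:ℝ) R₁,
      DifferentiableAt ℝ f r ∧ DifferentiableAt ℝ (deriv f) r ∧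
      deriv (deriv f) r = -(128 * α * γ ^ 2) * r * deriv f r
          - chat * γ / 2 * ∫ s in (0:ℝ)..r, φ s ∧
      deriv (deriv f) r ≤ 0) ∧
    ConcaveOn ℝ (Set.Ico (0:ℝ) R₁) f := by
  intro A φ Φ chat ψ f
  have hA : 0 < A := by positivity
  have hφcont : Continuous φ := by fun_prop
  have hφpos : ∀ s, 0 < φ s := fun s => Real.exp_pos _
  have hΦ : ∀ x, HasDerivAt Φ (φ x) x := fun x =>
    intervalIntegral.integral_hasDerivAt_right (hφcont.intervalIntegrable 0 x)
      (hφcont.stronglyMeasurableAtFilter _ _) hφcont.continuousAt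
  have hΦdiff : Differentiable ℝ Φ := fun x => (hΦ x).differentiableAt
  have hΦcont : Continuous Φ := hΦdiff.continuous
  have hq : Continuous (fun x => Φ x / φ x) :=
    hΦcont.div hφcont fun x => (hφpos x).ne'
  set P : ℝ → ℝ := fun y => ∫ t in (0:ℝ)..y, Φ t / φ t with hPdef
  have hP : ∀ x, HasDerivAt P (Φ x / φ x) x := fun x =>
    intervalIntegral.integral_hasDerivAt_right (hq.intervalIntegrable 0 x)
      (hq.stronglyMeasurableAtFilter _ _) hq.continuousAt
  have hPdiff : Differentiable ℝ P := fun x => (hP x).differentiableAt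
  have hPcont : Continuous P := hPdiff.continuous
  -- positivity of Φ and P
  have hΦnn : ∀ x, 0 ≤ x → 0 ≤ Φ x := fun x hx =>
    intervalIntegral.integral_nonneg hx fun s _ => (hφpos s).le
  have hΦpos : ∀ x, 0 < x → 0 < Φ x := fun x hx =>
    intervalIntegral.intervalIntegral_pos_of_pos (hφcont.intervalIntegrable 0 x) hφpos hx
  have hqnn : ∀ x, 0 ≤ x → 0 ≤ Φ x / φ x := fun x hx =>
    div_nonneg (hΦnn x hx) (hφpos x).le
  have hIpos : 0 < P R₁ :=
    intervalIntegral.intervalIntegral_pos_of_pos_on (hq.intervalIntegrable 0 R₁)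
      (fun x hx => div_pos (hΦpos x hx.1) (hφpos x)) hR
  have hchat : chat = 1 / (γ * P R₁) := rfl
  set c : ℝ := chat * γ / 2 with hcdef
  have hc : c = 1 / (2 * P R₁) := by
    rw [hcdef, hchat]
    field_simp
  have hcpos : 0 < c := by rw [hc]; positivity
  -- ψ bounds
  have hPnn : ∀ x, 0 ≤ x → 0 ≤ P x := fun x hx =>
    intervalIntegral.integral_nonneg hx fun s hs => hqnn s hs.1
  have hPmono : ∀ x, 0 ≤ x → x ≤ R₁ → P x ≤ P R₁ := by
    intro x hx hx'
    refine intervalIntegral.integral_mono_interval le_rfl hx hx' ?_ (hq.intervalIntegrable 0 R₁)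
    exact (ae_restrict_iff' measurableSet_Ioc).mpr
      (Filter.Eventually.of_forall fun s hs => hqnn s hs.1.le)
  have hψeq : ∀ s, ψ s = 1 - c * P (min s R₁) := fun s => rfl
  have hψnn : ∀ s, 0 ≤ s → 0 ≤ ψ s := by
    intro s hs
    rw [hψeq]
    have h1 : c * P (min s R₁) ≤ c * P R₁ :=
      mul_le_mul_of_nonneg_left
        (hPmono _ (le_min hs hR.le) (min_le_right _ _)) hcpos.le
    have h2 : c * P R₁ = 1 / 2 := by rw [hc]; field_simp
    linarith
  have hφeq : ∀ s, s ≤ R₁ → φ s = Real.exp (-A * s ^ 2 / 2) := by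
    intro s hs
    show Real.exp (-A * (min s R₁) ^ 2 / 2) = _
    rw [min_eq_left hs]
  have hψcont : Continuous ψ := by
    have hψfun : ψ = fun s => 1 - c * P (min s R₁) := rfl
    rw [hψfun]
    exact continuous_const.sub (continuous_const.mul (hPcont.comp (continuous_id.min continuous_const)))
  -- g = φ * ψ, the derivative of f
  set g : ℝ → ℝ := fun s => φ s * ψ s with hgdef
  have hgcont : Continuous g := hφcont.mul hψcont
  have hf' : ∀ r, HasDerivAt f (g r) r := fun r =>
    intervalIntegral.integral_hasDerivAt_right (hgcont.intervalIntegrable 0 r)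
      (hgcont.stronglyMeasurableAtFilter _ _) hgcont.continuousAt
  have hderivf : deriv f = g := funext fun r => (hf' r).deriv
  -- local model h without the min
  set h : ℝ → ℝ := fun s => Real.exp (-A * s ^ 2 / 2) * (1 - c * P s) with hhdef
  have hgh : ∀ s, s ≤ R₁ → g s = h s := by
    intro s hs
    show φ s * ψ s = _
    rw [hφeq s hs, hψeq, min_eq_left hs]
  have hg' : ∀ r, r < R₁ → HasDerivAt g (-A * r * g r - c * Φ r) r := by
    intro r hr
    have hmin : min r R₁ = r := min_eq_left hr.le
    have hev : h =ᶠ[nhds r] g := by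
      filter_upwards [Iio_mem_nhds hr] with s hs
      exact (hgh s (le_of_lt hs)).symm
    have hexp : HasDerivAt (fun s : ℝ => Real.exp (-A * s ^ 2 / 2))
        (-A * r * Real.exp (-A * r ^ 2 / 2)) r := by
      have h1 : HasDerivAt (fun s : ℝ => -A * s ^ 2 / 2) (-A * r) r := by
        have := ((hasDerivAt_pow 2 r).const_mul (-A)).div_const 2
        refine this.congr_deriv ?_
        push_cast
        ring
      convert h1.exp using 1
      ring
    have hlin : HasDerivAt (fun s => 1 - c * P s) (-(c * (Φ r / φ r))) r :=
      (((hP r).const_mul c).const_sub 1)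
    have hh : HasDerivAt h
        (-A * r * Real.exp (-A * r ^ 2 / 2) * (1 - c * P r) +
          Real.exp (-A * r ^ 2 / 2) * -(c * (Φ r / φ r))) r := hexp.mul hlin
    have hφr : φ r = Real.exp (-A * r ^ 2 / 2) := hφeq r hr.le
    have := hh.congr_of_eventuallyEq hev.symm
    refine this.congr_deriv ?_
    have hψr : ψ r = 1 - c * P r := by rw [hψeq, hmin]
    rw [hgdef]
    simp only [hφr, hψr]
    field_simp
    ring
  -- main pointwise claim
  have key : ∀ r ∈ Set.Ico (0:ℝ) R₁,
      DifferentiableAt ℝ f r ∧ DifferentiableAt ℝ (deriv f) r ∧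
      deriv (deriv f) r = -(128 * α * γ ^ 2) * r * deriv f r
          - chat * γ / 2 * ∫ s in (0:ℝ)..r, φ s ∧
      deriv (deriv f) r ≤ 0 := by
    intro r hr
    obtain ⟨hr0, hrR⟩ := hr
    have hgd := hg' r hrR
    have hd2 : deriv (deriv f) r = -A * r * g r - c * Φ r := by
      rw [hderivf]; exact hgd.deriv
    refine ⟨(hf' r).differentiableAt, ?_, ?_, ?_⟩
    · rw [hderivf]; exact hgd.differentiableAt
    · rw [hd2, hderivf]
    · rw [hd2]
      have h1 : 0 ≤ g r := mul_nonneg (hφpos r).le (hψnn r hr0)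
      have h2 : 0 ≤ c * Φ r := mul_nonneg hcpos.le (hΦnn r hr0)
      have h3 : -A * r * g r ≤ 0 := by
        have : 0 ≤ A * r * g r := by positivity
        linarith
      linarith
  refine ⟨key, ?_⟩
  -- concavity
  have hint : interior (Set.Ico (0:ℝ) R₁) = Set.Ioo 0 R₁ := interior_Ico
  have hfdiff : Differentiable ℝ f := fun x => (hf' x).differentiableAt
  refine concaveOn_of_deriv2_nonpos (convex_Ico 0 R₁)
    hfdiff.continuous.continuousOn ?_ ?_ ?_
  · intro x hx
    exact (hf' x).differentiableAt.differentiableWithinAt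
  · intro x hx
    rw [hint] at hx
    exact ((key x ⟨hx.1.le, hx.2⟩).2.1).differentiableWithinAt
  · intro x hx
    rw [hint] at hx
    have := (key x ⟨hx.1.le, hx.2⟩).2.2.2
    simpa [Function.iterate_succ, Function.comp] using this
end

section
/- With f, φ, Φ, ĉ as defined, for any r > 0 and any h, γ > 0 with 128αγ²·(h γ^{-1}) ≤ 2/3, the inequality (r/√(2γ^{-1}h)) ∫_0^{√(2γ^{-1}h)} φ(s) ds ≥ (1/2) f(r) holds. -/
/-!
On `[0, r]` both `φ ≤ 1` and `ψ ≤ 1` (the correction subtracted in `ψ` is nonnegative), so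
`f r ≤ r`. On `[0, √(2γ⁻¹h)]` the smallness condition gives `A s² / 2 ≤ 2/3 < log 2`, so
`φ ≥ 1/2` there and the average of `φ` over that interval is at least `1/2`.
-/

open MeasureTheory Set

section IntervalIntegralBounds

variable {f : ℝ → ℝ} {a b C : ℝ}

/-- No integrability is needed: a non-integrable `f` has integral `0`. -/
lemma intervalIntegral_le_mul_of_le (hab : a ≤ b) (hC : 0 ≤ C) (hf : ∀ x ∈ Icc a b, f x ≤ C) :
    ∫ x in a..b, f x ≤ C * (b - a) := by
  by_cases hint : IntervalIntegrable f volume a b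
  · simpa [mul_comm] using
      intervalIntegral.integral_mono_on hab hint intervalIntegrable_const hf
  · rw [intervalIntegral.integral_undef hint]
    exact mul_nonneg hC (sub_nonneg.mpr hab)

lemma mul_le_intervalIntegral_of_le (hab : a ≤ b) (hint : IntervalIntegrable f volume a b)
    (hf : ∀ x ∈ Icc a b, C ≤ f x) : C * (b - a) ≤ ∫ x in a..b, f x := by
  simpa [mul_comm] using
    intervalIntegral.integral_mono_on hab intervalIntegrable_const hint hf

lemma intervalIntegral_primitive_div_nonneg (hf : ∀ x, 0 ≤ x → 0 ≤ f x) {t : ℝ} (ht : 0 ≤ t) :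
    0 ≤ ∫ x in (0:ℝ)..t, (∫ y in (0:ℝ)..x, f y) / f x :=
  intervalIntegral.integral_nonneg ht fun x hx =>
    div_nonneg (intervalIntegral.integral_nonneg hx.1 fun y hy => hf y hy.1) (hf x hx.1)

end IntervalIntegralBounds

section ClampedGaussian

/-- The weight `φ` of the statement, with `A = 128αγ²` and clamping radius `R = R₁`. -/
noncomputable def clampedGaussian (A R s : ℝ) : ℝ := Real.exp (-A * min s R ^ 2 / 2)

variable {A R : ℝ}

lemma clampedGaussian_pos (s : ℝ) : 0 < clampedGaussian A R s := Real.exp_pos _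

lemma clampedGaussian_le_one (hA : 0 ≤ A) (s : ℝ) : clampedGaussian A R s ≤ 1 := by
  rw [clampedGaussian, Real.exp_le_one_iff]
  have : 0 ≤ A * min s R ^ 2 := by positivity
  linarith

lemma continuous_clampedGaussian : Continuous (clampedGaussian A R) := by
  unfold clampedGaussian
  fun_prop

lemma half_le_clampedGaussian {σ s : ℝ} (hA : 0 ≤ A) (hR : 0 ≤ R) (hσ : A * σ ^ 2 ≤ 4 / 3)
    (hs : s ∈ Icc 0 σ) : 1 / 2 ≤ clampedGaussian A R s := by
  have hmin : min s R ^ 2 ≤ σ ^ 2 :=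
    pow_le_pow_left₀ (le_min hs.1 hR) ((min_le_left s R).trans hs.2) 2
  have hlog : (2 / 3 : ℝ) ≤ Real.log 2 := by linarith [Real.log_two_gt_d9]
  calc (1 / 2 : ℝ) = Real.exp (-Real.log 2) := by rw [Real.exp_neg, Real.exp_log two_pos]; norm_num
    _ ≤ clampedGaussian A R s := by
        rw [clampedGaussian, Real.exp_le_exp]
        nlinarith [mul_le_mul_of_nonneg_left hmin hA]

end ClampedGaussian

/-- `(r/√(2γ⁻¹h)) ∫_0^{√(2γ⁻¹h)} φ ≥ (1/2) f(r)` under the smallness condition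
`128αγ²·hγ⁻¹ ≤ 2/3`. -/
theorem stmt6 (α γ R₁ h : ℝ) (hα : 0 < α) (hγ : 0 < γ) (hR : 0 < R₁) (hh : 0 < h)
    (hsmall : 128 * α * γ ^ 2 * (h * γ⁻¹) ≤ 2 / 3) :
    let A : ℝ := 128 * α * γ ^ 2
    let φ : ℝ → ℝ := fun s => Real.exp (-A * (min s R₁) ^ 2 / 2)
    let Φ : ℝ → ℝ := fun s => ∫ x in (0:ℝ)..s, φ x
    let chat : ℝ := 1 / (γ * ∫ s in (0:ℝ)..R₁, Φ s / φ s)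
    let ψ : ℝ → ℝ := fun s => 1 - chat * γ / 2 * ∫ x in (0:ℝ)..(min s R₁), Φ x / φ x
    let f : ℝ → ℝ := fun r => ∫ s in (0:ℝ)..r, φ s * ψ s
    ∀ r : ℝ, 0 < r →
      (1 / 2) * f r ≤
        (r / Real.sqrt (2 * γ⁻¹ * h)) * ∫ s in (0:ℝ)..Real.sqrt (2 * γ⁻¹ * h), φ s := by
  intro A φ Φ chat ψ f r hr
  have hA : 0 ≤ A := by positivity
  have hφ : ∀ x, 0 ≤ x → 0 ≤ φ x := fun x _ => (clampedGaussian_pos x).le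
  have hchat : 0 ≤ chat := by
    have := intervalIntegral_primitive_div_nonneg hφ hR.le
    positivity
  have hψ : ∀ s, 0 ≤ s → ψ s ≤ 1 := fun s hs =>
    sub_le_self 1 <| mul_nonneg (by positivity) <|
      intervalIntegral_primitive_div_nonneg hφ (le_min hs hR.le)
  have hf : f r ≤ r := by
    simpa using intervalIntegral_le_mul_of_le hr.le zero_le_one fun s hs =>
      (mul_le_of_le_one_right (hφ s hs.1) (hψ s hs.1)).trans (clampedGaussian_le_one hA s)
  set σ := Real.sqrt (2 * γ⁻¹ * h)
  have hσ : 0 < σ := Real.sqrt_pos.mpr (by positivity)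
  have hAσ : A * σ ^ 2 ≤ 4 / 3 := by
    rw [Real.sq_sqrt (by positivity)]
    linarith
  have hφσ : 1 / 2 * σ ≤ ∫ s in (0:ℝ)..σ, φ s := by
    simpa using mul_le_intervalIntegral_of_le (f := φ) hσ.le
      (continuous_clampedGaussian.intervalIntegrable 0 σ)
      fun s hs => half_le_clampedGaussian hA hR.le hAσ hs
  calc 1 / 2 * f r ≤ r / σ * (1 / 2 * σ) := by
        rw [show r / σ * (1 / 2 * σ) = 1 / 2 * r by field_simp]
        linarith
    _ ≤ r / σ * ∫ s in (0:ℝ)..σ, φ s := by gcongr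
end

section
/- (Contraction for the BU scheme at large distances.) Under the same decomposition U = (1/2)xᵀKx + G(x) with κI ⪯ K ⪯ L_K I, G convex outside radius R with L_G-Lipschitz gradient, consider the synchronously coupled BU update with η = e^{-γh}: Z_{k+1} = Z_k + ((1−η)/γ)W_k − ((1−η)/γ)h(∇U(X_k)−∇U(X_k')), W_{k+1} = ηW_k − hη(∇U(X_k)−∇U(X_k')). If r_l²(k) ≥ τ^{-1}L_G R² γ^{-2} with τ = min(κ/(6γ²), 1/16), h < min(γ/(55L_K), 1/(15γ)), and L_Gγ^{-2} ≤ κ/(13L_G), then r_l²(k+1) ≤ (1 − (7/8)τγh) r_l²(k). -/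
set_option maxHeartbeats 1000000

open Matrix

lemma dotSelfNonneg {d : ℕ} (x : Fin d → ℝ) : 0 ≤ x ⬝ᵥ x :=
  Finset.sum_nonneg fun i _ => mul_self_nonneg (x i)

lemma dotCS {d : ℕ} (x y : Fin d → ℝ) : (x ⬝ᵥ y)^2 ≤ (x ⬝ᵥ x) * (y ⬝ᵥ y) := by
  have := Finset.sum_mul_sq_le_sq_mul_sq Finset.univ x y
  simpa [dotProduct, sq] using this

lemma symdot {d : ℕ} (K : Matrix (Fin d) (Fin d) ℝ) (hsymm : K.IsSymm)
    (x y : Fin d → ℝ) : x ⬝ᵥ (K *ᵥ y) = y ⬝ᵥ (K *ᵥ x) := by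
  rw [dotProduct_mulVec, ← Matrix.mulVec_transpose, hsymm.eq, dotProduct_comm]

lemma quadExpand {d : ℕ} (K : Matrix (Fin d) (Fin d) ℝ) (hsymm : K.IsSymm)
    (x y : Fin d → ℝ) (u v : ℝ) :
    (u • x - v • y) ⬝ᵥ (K *ᵥ (u • x - v • y)) =
      u^2 * (x ⬝ᵥ (K *ᵥ x)) - 2*u*v*(x ⬝ᵥ (K *ᵥ y)) + v^2 * (y ⬝ᵥ (K *ᵥ y)) := by
  simp only [Matrix.mulVec_sub, Matrix.mulVec_smul, sub_dotProduct, dotProduct_sub,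
    smul_dotProduct, dotProduct_smul, smul_eq_mul, symdot K hsymm y x]
  ring

lemma KCS {d : ℕ} (K : Matrix (Fin d) (Fin d) ℝ) (hsymm : K.IsSymm) (κ : ℝ) (hκ : 0 < κ)
    (hKlo : ∀ x : Fin d → ℝ, κ * (x ⬝ᵥ x) ≤ x ⬝ᵥ (K *ᵥ x))
    (x y : Fin d → ℝ) : (x ⬝ᵥ (K *ᵥ y))^2 ≤ (x ⬝ᵥ (K *ᵥ x)) * (y ⬝ᵥ (K *ᵥ y)) := by
  have hC0 : 0 ≤ y ⬝ᵥ (K *ᵥ y) := le_trans (mul_nonneg hκ.le (dotSelfNonneg y)) (hKlo y)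
  rcases eq_or_lt_of_le hC0 with hCz | hCpos
  · have hyy : y ⬝ᵥ y = 0 := by nlinarith [hKlo y, dotSelfNonneg y]
    have hy : y = 0 := dotProduct_self_eq_zero.mp hyy
    simp [hy]
  · have h0 : 0 ≤ ((y ⬝ᵥ (K *ᵥ y)) • x - (x ⬝ᵥ (K *ᵥ y)) • y) ⬝ᵥ
        (K *ᵥ ((y ⬝ᵥ (K *ᵥ y)) • x - (x ⬝ᵥ (K *ᵥ y)) • y)) :=
      le_trans (mul_nonneg hκ.le (dotSelfNonneg _)) (hKlo _)
    rw [quadExpand K hsymm] at h0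
    nlinarith [h0, hCpos]

lemma sqAbs {A u : ℝ} (hA : 0 ≤ A) (h : u^2 ≤ A^2) : -A ≤ u ∧ u ≤ A := by
  constructor <;> nlinarith [sq_nonneg (u - A), sq_nonneg (u + A)]

lemma KmulSelf {d : ℕ} (K : Matrix (Fin d) (Fin d) ℝ) (hsymm : K.IsSymm) (κ LK : ℝ) (hκ : 0 < κ)
    (hKlo : ∀ x : Fin d → ℝ, κ * (x ⬝ᵥ x) ≤ x ⬝ᵥ (K *ᵥ x))
    (hKhi : ∀ x : Fin d → ℝ, x ⬝ᵥ (K *ᵥ x) ≤ LK * (x ⬝ᵥ x))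
    (x : Fin d → ℝ) : (K *ᵥ x) ⬝ᵥ (K *ᵥ x) ≤ LK * (x ⬝ᵥ (K *ᵥ x)) := by
  have h1 : (x ⬝ᵥ (K *ᵥ (K *ᵥ x)))^2 ≤ (x ⬝ᵥ (K *ᵥ x)) * ((K *ᵥ x) ⬝ᵥ (K *ᵥ (K *ᵥ x))) :=
    KCS K hsymm κ hκ hKlo x (K *ᵥ x)
  have h2 : x ⬝ᵥ (K *ᵥ (K *ᵥ x)) = (K *ᵥ x) ⬝ᵥ (K *ᵥ x) := symdot K hsymm x (K *ᵥ x)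
  have h3 : (K *ᵥ x) ⬝ᵥ (K *ᵥ (K *ᵥ x)) ≤ LK * ((K *ᵥ x) ⬝ᵥ (K *ᵥ x)) := hKhi (K *ᵥ x)
  have h4 : 0 ≤ (K *ᵥ x) ⬝ᵥ (K *ᵥ x) := dotSelfNonneg _
  have h5 : 0 ≤ x ⬝ᵥ (K *ᵥ x) := le_trans (mul_nonneg hκ.le (dotSelfNonneg x)) (hKlo x)
  rcases eq_or_lt_of_le h4 with hz | hpos
  · have hKx : K *ᵥ x = 0 := dotProduct_self_eq_zero.mp hz.symm
    simp [hKx]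
  · rw [h2] at h1
    nlinarith [mul_le_mul_of_nonneg_left h3 h5]


lemma keyIneq (c s h a ψ η τ κ LK LG R : ℝ)
    (p q r al be rho g1 g2 zKd wKd dd dKd : ℝ)
    (hc0 : 0 < c) (hh0 : 0 < h) (hκ0 : 0 < κ) (hLK0 : 0 < LK) (hLG0 : 0 < LG)
    (hs0 : 0 < s) (hs : s ≤ 1/15) (hsc : h = s*c)
    (hLKb : h*LK*c ≤ 1/55)
    (hτ0 : 0 < τ) (hτ1 : τ ≤ 1/16) (hτ2 : 6*τ ≤ κ*c^2)
    (hLGκ : 13*(LG^2*c^2) ≤ κ)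
    (hη1 : 1 - s ≤ η) (hη2 : η ≤ 1 - s + s^2)
    (ha : a = (1-η)*c) (hψ : ψ = 1 - 2*τ*(1-η))
    (hp : 0 ≤ p) (hr : 0 ≤ r)
    (hal1 : κ*p ≤ al) (hal2 : al ≤ LK*p) (hρ1 : κ*r ≤ rho) (hρ2 : rho ≤ LK*r)
    (hq : q^2 ≤ p*r) (hbe : be^2 ≤ al*rho)
    (hg1 : g1^2 ≤ LG^2*p^2) (hg2 : g2^2 ≤ LG^2*(p*r))
    (hzKd : -(LG^2*p) ≤ 2*zKd)
    (hwKd2 : -(LK*al + 2*c^2*(LK*rho) + LG^2*p) ≤ 2*(c*wKd))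
    (hdd0 : 0 ≤ dd) (hddU : dd ≤ 2*(LK*al) + 2*(LG^2*p))
    (hdKd0 : 0 ≤ dKd) (hdKdU : dKd ≤ 2*(LK^2*al) + 2*(LK*(LG^2*p)))
    (hcase : 0 ≤ g1 ∨ (LG*R^2*c^2 ≤ τ*(c^2*al + (1/2)*(1-2*τ)^2*p + (1-2*τ)*c*q + c^2*r) ∧ p ≤ R^2)) :
    c^2*(al + 2*a*be - 2*a*h*zKd + a^2*rho - 2*a^2*h*wKd + a^2*h^2*dKd)
      + (1/2)*((1-2*τ)^2*p + 2*(1-2*τ)*(ψ*c)*q - 2*(1-2*τ)*(ψ*c)*h*(al+g1)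
          + (ψ*c)^2*r - 2*(ψ*c)^2*h*(be+g2) + (ψ*c)^2*h^2*dd)
      + (1/2)*c^2*(η^2*r - 2*η^2*h*(be+g2) + η^2*h^2*dd)
      ≤ (1 - 7/8*τ*s) * (c^2*al + (1/2)*(1-2*τ)^2*p + (1-2*τ)*c*q + c^2*r) := by
  -- basic facts
  have hss : s^2 ≤ s := by nlinarith only [hs, hs0]
  have hss15 : s^2 ≤ s*(1/15) := by nlinarith only [hs, hs0]
  have hm0 : 0 ≤ 1 - η := by linarith only [hη2, hss]
  have hms : 1 - η ≤ s := by linarith only [hη1]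
  have hmlo : s - s^2 ≤ 1 - η := by linarith only [hη2]
  have hη0 : 0 < η := by linarith only [hη1, hs]
  have hηle : η ≤ 1 := by linarith only [hm0]
  have ha0 : 0 ≤ a := by rw [ha]; positivity
  have hah : a ≤ h := by rw [ha, hsc]; nlinarith only [hms, hc0.le, mul_le_mul_of_nonneg_right hms hc0.le]
  have hτm : τ*(1-η) ≤ (1/16)*(1/15) := by
    nlinarith only [hτ1, hms, hs, hτ0, hm0, mul_nonneg hτ0.le hm0,
      mul_nonneg (sub_nonneg.2 hτ1) (sub_nonneg.2 (hms.trans hs)),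
      mul_nonneg (sub_nonneg.2 hτ1) hm0, mul_nonneg hτ0.le (sub_nonneg.2 (hms.trans hs))]
  have hτm0 : 0 ≤ τ*(1-η) := mul_nonneg hτ0.le hm0
  have hψ1 : ψ ≤ 1 := by rw [hψ]; linarith only [hτm0]
  have hψlb : 1 - s/8 ≤ ψ := by
    rw [hψ]
    nlinarith only [hτ1, hms, hτ0, hm0, mul_nonneg (sub_nonneg.2 hτ1) hm0,
      mul_le_mul_of_nonneg_left hms hτ0.le]
  have hψ0 : 0 < ψ := by nlinarith only [hψlb, hs]
  have hb0 : (0:ℝ) < 1 - 2*τ := by linarith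
  have hb1 : (1:ℝ) - 2*τ ≤ 1 := by linarith
  have hal0 : 0 ≤ al := le_trans (mul_nonneg hκ0.le hp) hal1
  have hρ0 : 0 ≤ rho := le_trans (mul_nonneg hκ0.le hr) hρ1
  have hscLK : s*c^2*LK ≤ 1/55 := by rw [hsc] at hLKb; linarith only [hLKb]
  have hchLK : c*h*LK ≤ 1/55 := by rw [hsc]; linarith only [hscLK]
  have hLG13 : LG^2*c^2 ≤ κ/13 := by linarith only [hLGκ]
  have hτκ : τ ≤ κ*c^2/6 := by linarith only [hτ2]
  -- balanced Cauchy-Schwarz forms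
  have hbeB : -(al + c^2*rho) ≤ 2*(c*be) ∧ 2*(c*be) ≤ al + c^2*rho := by
    constructor <;>
    nlinarith only [sq_nonneg (al - c^2*rho), mul_nonneg (sq_nonneg c) (sub_nonneg.2 hbe),
      sq_nonneg (al + c^2*rho - 2*(c*be)), sq_nonneg (al + c^2*rho + 2*(c*be)),
      add_nonneg hal0 (mul_nonneg (sq_nonneg c) hρ0)]
  have hqB : -(p + c^2*r) ≤ 2*(c*q) ∧ 2*(c*q) ≤ p + c^2*r := by
    constructor <;>
    nlinarith only [sq_nonneg (p - c^2*r), mul_nonneg (sq_nonneg c) (sub_nonneg.2 hq),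
      sq_nonneg (p + c^2*r - 2*(c*q)), sq_nonneg (p + c^2*r + 2*(c*q)),
      add_nonneg hp (mul_nonneg (sq_nonneg c) hr)]
  have hg1B : -(LG*p) ≤ g1 := by
    nlinarith only [hg1, sq_nonneg (g1 + LG*p), sq_nonneg (g1 - LG*p), mul_nonneg hLG0.le hp]
  have hg2B : -((5/3)*c^2*(LG^2*p) + (3/5)*r) ≤ 2*(c*g2) := by
    nlinarith only [hg2, sq_nonneg ((5/3)*c^2*(LG^2*p) - (3/5)*r),
      mul_nonneg (sq_nonneg c) (sub_nonneg.2 hg2),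
      sq_nonneg ((5/3)*c^2*(LG^2*p) + (3/5)*r + 2*(c*g2)),
      add_nonneg (mul_nonneg (by positivity : (0:ℝ) ≤ (5/3)*c^2*LG^2) hp) (by positivity : (0:ℝ) ≤ (3/5)*r)]

  -- cS1
  have hC1u : 2*c^2*a - h*((ψ*c)^2 + c^2*η^2) ≤ 3*s^2*c^3 := by
    rw [ha, hψ, hsc]
    nlinarith only [hs0, hms, hm0, hτ0, hτ1, hc0, pow_pos hc0 3,
      mul_nonneg hs0.le (sq_nonneg (τ*(1-η))), mul_nonneg hs0.le (sq_nonneg (1-η)),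
      mul_nonneg (sub_nonneg.2 hms) hs0.le,
      mul_nonneg (sub_nonneg.2 hτ1) (mul_nonneg hs0.le hm0),
      mul_pos hs0 (pow_pos hc0 3), pow_pos hc0 3,
      mul_nonneg (mul_nonneg hs0.le (sq_nonneg (τ*(1-η)))) (pow_pos hc0 3).le,
      mul_nonneg (mul_nonneg hs0.le (sq_nonneg (1-η))) (pow_pos hc0 3).le,
      mul_nonneg (mul_nonneg (sub_nonneg.2 hms) hs0.le) (pow_pos hc0 3).le,
      mul_nonneg (mul_nonneg (sub_nonneg.2 hτ1) (mul_nonneg hs0.le hm0)) (pow_pos hc0 3).le]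
  have hC1l : -(3*s^2*c^3) ≤ 2*c^2*a - h*((ψ*c)^2 + c^2*η^2) := by
    rw [ha, hψ, hsc]
    nlinarith only [hs0, hms, hmlo, hm0, hτ0, hτ1, hτm, hc0, hη0, hηle,
      mul_nonneg (mul_nonneg (mul_nonneg hs0.le hτm0) (by linarith only [hτm] : (0:ℝ) ≤ 1 - τ*(1-η))) (pow_pos hc0 3).le,
      mul_nonneg (mul_nonneg (mul_nonneg hs0.le hm0) (by linarith only [hη0] : (0:ℝ) ≤ 1 + η)) (pow_pos hc0 3).le,
      mul_nonneg (mul_nonneg hs0.le hs0.le) (pow_pos hc0 3).le,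
      mul_nonneg (sub_nonneg.2 hmlo) (pow_pos hc0 3).le]
  have cS1 : c*((2*c^2*a - h*((ψ*c)^2 + c^2*η^2))*be) ≤ (1/10)*(h*c^2)*al + (3/110)*(h*c^2)*r := by
    have k1 : c*((2*c^2*a - h*((ψ*c)^2 + c^2*η^2))*be) ≤ (3/2)*s^2*c^3*al + (3/2)*s^2*c^3*(c^2*rho) := by
      nlinarith only [mul_nonneg (sub_nonneg.2 hC1u) (by linarith only [hbeB.1] : (0:ℝ) ≤ al + c^2*rho + 2*(c*be)),
        mul_nonneg (by linarith only [hC1l] : (0:ℝ) ≤ 2*c^2*a - h*((ψ*c)^2 + c^2*η^2) + 3*s^2*c^3)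
          (by linarith only [hbeB.2] : (0:ℝ) ≤ al + c^2*rho - 2*(c*be))]
    have k2 : (3/2)*s^2*c^3*al ≤ (1/10)*(h*c^2)*al := by
      rw [hsc]
      nlinarith only [mul_nonneg (mul_nonneg (by linarith only [hs] : (0:ℝ) ≤ 1/15 - s)
        (by positivity : (0:ℝ) ≤ s*c^3)) hal0]
    have k3 : (3/2)*s^2*c^3*(c^2*rho) ≤ (3/110)*(h*c^2)*r := by
      rw [hsc]
      nlinarith only [mul_nonneg (by positivity : (0:ℝ) ≤ s^2*c^5) (sub_nonneg.2 hρ2),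
        mul_nonneg (mul_nonneg (sub_nonneg.2 hscLK) (by positivity : (0:ℝ) ≤ s*c^3)) hr, hr, hs0, hc0]
    linarith only [k1, k2, k3]
  -- cS2
  have cS2 : c*(-(2*c^2*a*h)*zKd) ≤ (1/195)*(h*c^2)*(κ*p) := by
    have k1 : c*(-(2*c^2*a*h)*zKd) ≤ c^3*a*h*(LG^2*p) := by
      nlinarith only [mul_nonneg (mul_nonneg (mul_nonneg (pow_pos hc0 3).le ha0) hh0.le)
        (by linarith only [hzKd] : (0:ℝ) ≤ 2*zKd + LG^2*p)]
    have k2 : c^3*a*h*(LG^2*p) ≤ c^3*h*h*(LG^2*p) := by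
      nlinarith only [mul_nonneg (mul_nonneg (mul_nonneg (pow_pos hc0 3).le hh0.le)
        (mul_nonneg (sq_nonneg LG) hp)) (sub_nonneg.2 hah)]
    have hx : c*h*LG^2 ≤ κ/195 := by
      rw [hsc]
      nlinarith only [mul_nonneg (by linarith only [hs] : (0:ℝ) ≤ 1/15 - s)
        (mul_nonneg (sq_nonneg LG) (sq_nonneg c)), hLG13, hs0, hLGκ]
    have k3 : c^3*h*h*(LG^2*p) ≤ (1/195)*(h*c^2)*(κ*p) := by
      nlinarith only [mul_nonneg (sub_nonneg.2 hx) (mul_nonneg (mul_nonneg hh0.le (sq_nonneg c)) hp)]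
    linarith only [k1, k2, k3]
  -- cS3
  have cS3 : c*(c^2*a^2*rho) ≤ (1/55)*(h*c^2)*r := by
    have k1 : c*(c^2*a^2*rho) ≤ c^3*(h*h)*rho := by
      nlinarith only [mul_nonneg (mul_nonneg (pow_pos hc0 3).le hρ0)
        (mul_nonneg (sub_nonneg.2 hah) (by linarith only [ha0, hah] : (0:ℝ) ≤ h + a)), ha0, hah]
    have k2 : c^3*(h*h)*rho ≤ c^3*(h*h)*(LK*r) := by
      nlinarith only [mul_nonneg (by positivity : (0:ℝ) ≤ c^3*(h*h)) (sub_nonneg.2 hρ2)]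
    have k3 : c^3*(h*h)*(LK*r) ≤ (1/55)*(h*c^2)*r := by
      nlinarith only [mul_nonneg (sub_nonneg.2 hchLK) (mul_nonneg (mul_nonneg hh0.le (sq_nonneg c)) hr)]
    linarith only [k1, k2, k3]
  -- cS4
  have cS4 : c*(-(2*c^2*a^2*h)*wKd) ≤ (1/825)*(h*c^2)*al + (2/3025)*(h*c^2)*r + (1/2925)*(h*c^2)*(κ*p) := by
    have hX0 : (0:ℝ) ≤ LK*al + 2*c^2*(LK*rho) + LG^2*p := by positivity
    have k1 : c*(-(2*c^2*a^2*h)*wKd) ≤ c^2*a^2*h*(LK*al + 2*c^2*(LK*rho) + LG^2*p) := by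
      nlinarith only [mul_nonneg (mul_nonneg (mul_nonneg (sq_nonneg c) (sq_nonneg a)) hh0.le)
        (by linarith only [hwKd2] : (0:ℝ) ≤ 2*(c*wKd) + (LK*al + 2*c^2*(LK*rho) + LG^2*p))]
    have k2 : c^2*a^2*h*(LK*al + 2*c^2*(LK*rho) + LG^2*p) ≤ c^2*(h*h)*h*(LK*al + 2*c^2*(LK*rho) + LG^2*p) := by
      nlinarith only [mul_nonneg (mul_nonneg (mul_nonneg (sq_nonneg c) hh0.le) hX0)
        (mul_nonneg (sub_nonneg.2 hah) (by linarith only [ha0, hah] : (0:ℝ) ≤ h + a))]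
    have k3 : c^2*(h*h)*h*(LK*al) ≤ (1/825)*(h*c^2)*al := by
      have hx : h*h*LK ≤ 1/825 := by
        rw [hsc]
        nlinarith only [mul_nonneg (by linarith only [hs] : (0:ℝ) ≤ 1/15 - s)
          (by positivity : (0:ℝ) ≤ s*c^2*LK), hscLK, hs0, hc0, hLK0,
          mul_nonneg (sub_nonneg.2 hscLK) hs0.le]
      nlinarith only [mul_nonneg (sub_nonneg.2 hx) (mul_nonneg (mul_nonneg hh0.le (sq_nonneg c)) hal0)]
    have k4 : c^2*(h*h)*h*(2*c^2*(LK*rho)) ≤ (2/3025)*(h*c^2)*r := by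
      have k4a : c^2*(h*h)*h*(2*c^2*(LK*rho)) ≤ c^2*(h*h)*h*(2*c^2*(LK*(LK*r))) := by
        nlinarith only [mul_nonneg (by positivity : (0:ℝ) ≤ c^2*(h*h)*h*(2*c^2*LK)) (sub_nonneg.2 hρ2)]
      have k4b : c^2*(h*h)*h*(2*c^2*(LK*(LK*r))) ≤ (2/3025)*(h*c^2)*r := by
        nlinarith only [mul_nonneg (mul_nonneg (sub_nonneg.2 hchLK)
          (by linarith only [hchLK, mul_pos (mul_pos hc0 hh0) hLK0] : (0:ℝ) ≤ 1/55 + c*h*LK))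
          (mul_nonneg (mul_nonneg hh0.le (sq_nonneg c)) hr),
          mul_nonneg (sub_nonneg.2 hchLK) (mul_nonneg (mul_nonneg hh0.le (sq_nonneg c)) hr),
          mul_pos (mul_pos hc0 hh0) hLK0]
      linarith only [k4a, k4b]
    have k5 : c^2*(h*h)*h*(LG^2*p) ≤ (1/2925)*(h*c^2)*(κ*p) := by
      have hx : h*h*LG^2 ≤ κ/2925 := by
        rw [hsc]
        nlinarith only [mul_nonneg (by nlinarith only [hs, hs0] : (0:ℝ) ≤ 1/225 - s^2)
          (mul_nonneg (sq_nonneg LG) (sq_nonneg c)), hLG13, hLGκ]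
      nlinarith only [mul_nonneg (sub_nonneg.2 hx) (mul_nonneg (mul_nonneg hh0.le (sq_nonneg c)) hp)]
    nlinarith only [k1, k2, k3, k4, k5]
  -- cS5
  have cS5 : c*(c^2*a^2*h^2*dKd) ≤ (2/45375)*(h*c^2)*al + (2/160875)*(h*c^2)*(κ*p) := by
    have k1 : c*(c^2*a^2*h^2*dKd) ≤ c^3*(h*h)*h^2*dKd := by
      nlinarith only [mul_nonneg (mul_nonneg (pow_pos hc0 3).le (sq_nonneg h)) hdKd0,
        mul_nonneg (mul_nonneg (mul_nonneg (pow_pos hc0 3).le (sq_nonneg h)) hdKd0)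
          (mul_nonneg (sub_nonneg.2 hah) (by linarith only [ha0, hah] : (0:ℝ) ≤ h + a))]
    have k2 : c^3*(h*h)*h^2*dKd ≤ c^3*(h*h)*h^2*(2*(LK^2*al) + 2*(LK*(LG^2*p))) := by
      nlinarith only [mul_nonneg (by positivity : (0:ℝ) ≤ c^3*(h*h)*h^2) (sub_nonneg.2 hdKdU)]
    have k3 : c^3*(h*h)*h^2*(2*(LK^2*al)) ≤ (2/45375)*(h*c^2)*al := by
      have hx : c*h^3*LK^2 ≤ 1/45375 := by
        rw [hsc]
        nlinarith only [hs, hs0,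
          mul_nonneg (mul_nonneg (sub_nonneg.2 hscLK)
            (by positivity : (0:ℝ) ≤ 1/55 + s*c^2*LK)) hs0.le,
          mul_nonneg (by linarith only [hs] : (0:ℝ) ≤ 1/15 - s) (sq_nonneg (s*c^2*LK)),
          sq_nonneg (s*c^2*LK)]
      nlinarith only [mul_nonneg (sub_nonneg.2 hx) (mul_nonneg (mul_nonneg hh0.le (sq_nonneg c)) hal0)]
    have k4 : c^3*(h*h)*h^2*(2*(LK*(LG^2*p))) ≤ (2/160875)*(h*c^2)*(κ*p) := by
      have hx : c*h^3*(LK*LG^2) ≤ κ/160875 := by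
        have h1 : h*h*LG^2 ≤ κ/2925 := by
          rw [hsc]
          nlinarith only [mul_nonneg (by nlinarith only [hs, hs0] : (0:ℝ) ≤ 1/225 - s^2)
            (mul_nonneg (sq_nonneg LG) (sq_nonneg c)), hLG13, hLGκ]
        nlinarith only [h1, hchLK, hκ0, mul_pos (mul_pos hc0 hh0) hLK0,
          mul_nonneg (sub_nonneg.2 hchLK) (by linarith only [h1, hκ0] : (0:ℝ) ≤ κ/2925 - h*h*LG^2 + κ/2925),
          mul_nonneg (sub_nonneg.2 hchLK) (sub_nonneg.2 h1),
          mul_nonneg (mul_nonneg (mul_nonneg hc0.le hh0.le) hLK0.le) (sub_nonneg.2 h1),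
          mul_nonneg (sub_nonneg.2 hchLK) (mul_nonneg (mul_nonneg hh0.le hh0.le) (sq_nonneg LG))]
      nlinarith only [mul_nonneg (sub_nonneg.2 hx) (mul_nonneg (mul_nonneg hh0.le (sq_nonneg c)) hp)]
    nlinarith only [k1, k2, k3, k4]
  -- cS6
  have hcoef2 : (ψ*c)^2 + c^2*η^2 ≤ 2*c^2 := by
    nlinarith only [hψ0, hψ1, hη0, hηle, sq_nonneg c,
      mul_nonneg (sq_nonneg c) (mul_nonneg (sub_nonneg.2 hψ1) (by linarith only [hψ0] : (0:ℝ) ≤ 1 + ψ)),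
      mul_nonneg (sq_nonneg c) (mul_nonneg (sub_nonneg.2 hηle) (by linarith only [hη0] : (0:ℝ) ≤ 1 + η))]
  have hcoef0 : (0:ℝ) ≤ (ψ*c)^2 + c^2*η^2 := by positivity
  have cS6 : c*((1/2)*((ψ*c)^2 + c^2*η^2)*h^2*dd) ≤ (2/55)*(h*c^2)*al + (2/195)*(h*c^2)*(κ*p) := by
    have k1 : c*((1/2)*((ψ*c)^2 + c^2*η^2)*h^2*dd) ≤ c*(c^2*h^2*dd) := by
      nlinarith only [mul_nonneg (mul_nonneg (mul_nonneg hc0.le (sq_nonneg h)) hdd0) (sub_nonneg.2 hcoef2)]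
    have k2 : c*(c^2*h^2*dd) ≤ c^3*h^2*(2*(LK*al) + 2*(LG^2*p)) := by
      nlinarith only [mul_nonneg (by positivity : (0:ℝ) ≤ c^3*h^2) (sub_nonneg.2 hddU)]
    have k3 : c^3*h^2*(2*(LK*al)) ≤ (2/55)*(h*c^2)*al := by
      nlinarith only [mul_nonneg (sub_nonneg.2 hchLK) (mul_nonneg (mul_nonneg hh0.le (sq_nonneg c)) hal0)]
    have k4 : c^3*h^2*(2*(LG^2*p)) ≤ (2/195)*(h*c^2)*(κ*p) := by
      have hx : c*h*LG^2 ≤ κ/195 := by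
        rw [hsc]
        nlinarith only [mul_nonneg (by linarith only [hs] : (0:ℝ) ≤ 1/15 - s)
          (mul_nonneg (sq_nonneg LG) (sq_nonneg c)), hLG13, hs0, hLGκ]
      nlinarith only [mul_nonneg (sub_nonneg.2 hx) (mul_nonneg (mul_nonneg hh0.le (sq_nonneg c)) hp)]
    linarith only [k1, k2, k3, k4]
  -- cS7
  have cS7 : c*(((1-2*τ)*c*(ψ-1) + (7/8)*τ*s*((1-2*τ)*c))*q)
      ≤ (3/32)*(h*c^2)*(κ*p) + (9/256)*(h*c^2)*r := by
    have k1 : (1-2*τ)*c*(ψ-1) + (7/8)*τ*s*((1-2*τ)*c) ≤ 0 := by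
      rw [hψ]
      nlinarith only [mul_nonneg (mul_nonneg (mul_nonneg hb0.le hc0.le) hτ0.le)
        (by linarith only [hmlo, hss15, hs0] : (0:ℝ) ≤ 2*(1-η) - (7/8)*s)]
    have k2 : -((9/8)*τ*s*c) ≤ (1-2*τ)*c*(ψ-1) + (7/8)*τ*s*((1-2*τ)*c) := by
      rw [hψ]
      nlinarith only [mul_nonneg (mul_nonneg (mul_nonneg hc0.le hτ0.le) hb0.le)
        (by linarith only [hms] : (0:ℝ) ≤ (7/8)*s - 2*(1-η) + (9/8)*s),
        mul_nonneg (mul_nonneg (mul_nonneg hτ0.le hτ0.le) hs0.le) hc0.le]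
    have k3 : c*(((1-2*τ)*c*(ψ-1) + (7/8)*τ*s*((1-2*τ)*c))*q) ≤ (9/16)*τ*s*c*(p + c^2*r) := by
      nlinarith only [mul_nonneg (by linarith only [k1] : (0:ℝ) ≤ -((1-2*τ)*c*(ψ-1) + (7/8)*τ*s*((1-2*τ)*c)))
        (by linarith only [hqB.1] : (0:ℝ) ≤ p + c^2*r + 2*(c*q)),
        mul_nonneg (by linarith only [k2] : (0:ℝ) ≤ (1-2*τ)*c*(ψ-1) + (7/8)*τ*s*((1-2*τ)*c) + (9/8)*τ*s*c)
        (add_nonneg hp (mul_nonneg (sq_nonneg c) hr))]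
    have k4 : (9/16)*τ*s*c*(p + c^2*r) ≤ (3/32)*(h*c^2)*(κ*p) + (9/256)*(h*c^2)*r := by
      rw [hsc]
      nlinarith only [mul_nonneg (sub_nonneg.2 hτ2) (mul_nonneg (mul_nonneg hs0.le hc0.le) hp),
        mul_nonneg (sub_nonneg.2 hτ1) (mul_nonneg (by positivity : (0:ℝ) ≤ s*c^3) hr)]
    linarith only [k3, k4]
  -- cS8
  have hbψ : 833/960 ≤ (1-2*τ)*ψ := by
    rw [hψ]
    nlinarith only [mul_nonneg (sub_nonneg.2 hτ1) (by linarith only [hms, hs] : (0:ℝ) ≤ 1/15 - (1-η)),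
      mul_nonneg hτ0.le hm0, mul_nonneg (mul_nonneg hτ0.le hτ0.le) hm0,
      mul_nonneg (sub_nonneg.2 hτ1) hm0, mul_nonneg hτ0.le (by linarith only [hms, hs] : (0:ℝ) ≤ 1/15 - (1-η)),
      mul_nonneg (mul_nonneg (sub_nonneg.2 hτ1) hτ0.le) hm0]
  have cS8 : c*(-((1-2*τ)*(ψ*c)*h)*al) ≤ -(833/960)*(h*c^2)*al := by
    nlinarith only [mul_nonneg (sub_nonneg.2 hbψ) (mul_nonneg (mul_nonneg (sq_nonneg c) hh0.le) hal0)]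
  -- cS10
  have cS10 : c*((1/2)*(ψ*c)^2*r + (1/2)*c^2*η^2*r - c^2*r) ≤ -(9/10)*(h*c^2)*r := by
    have k1 : ψ^2 + η^2 - 2 ≤ -(9/5)*s := by
      rw [hψ]
      nlinarith only [hτm0, hτm, hs0, hs, hmlo, hms, hm0,
        mul_nonneg hτm0 (by linarith only [hτm] : (0:ℝ) ≤ 1 - τ*(1-η)),
        mul_nonneg (sub_nonneg.2 hmlo) (by linarith only [hms, hs] : (0:ℝ) ≤ 2 - (1-η)),
        mul_nonneg hs0.le (by linarith only [hs] : (0:ℝ) ≤ 1/15 - s),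
        mul_nonneg (sub_nonneg.2 hmlo) hm0]
    have k2 : c*((1/2)*(ψ*c)^2*r + (1/2)*c^2*η^2*r - c^2*r) = (1/2)*(c^3*r)*(ψ^2 + η^2 - 2) := by ring
    rw [k2, hsc]
    nlinarith only [mul_nonneg (mul_nonneg (pow_pos hc0 3).le hr)
      (by linarith only [k1] : (0:ℝ) ≤ -(9/5)*s - (ψ^2 + η^2 - 2)), hr, hs0, hc0]
  -- cS11
  have cS11 : c*(-(h*((ψ*c)^2 + c^2*η^2))*g2) ≤ (3/5)*(h*c^2)*r + (5/39)*(h*c^2)*(κ*p) := by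
    have kE0 : (0:ℝ) ≤ h*((ψ*c)^2 + c^2*η^2) := mul_nonneg hh0.le hcoef0
    have hU0 : (0:ℝ) ≤ (5/3)*c^2*(LG^2*p) + (3/5)*r := by positivity
    have m1 : c*(-(h*((ψ*c)^2 + c^2*η^2))*g2) ≤ (h*c^2)*((5/3)*c^2*(LG^2*p) + (3/5)*r) := by
      nlinarith only [mul_nonneg kE0 (by linarith only [hg2B] : (0:ℝ) ≤ (5/3)*c^2*(LG^2*p) + (3/5)*r + 2*(c*g2)),
        mul_nonneg (by nlinarith only [hcoef2, hh0] : (0:ℝ) ≤ 2*(h*c^2) - h*((ψ*c)^2 + c^2*η^2)) hU0]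
    have m2 : (h*c^2)*((5/3)*c^2*(LG^2*p)) ≤ (5/39)*(h*c^2)*(κ*p) := by
      nlinarith only [mul_nonneg (by linarith only [hLG13] : (0:ℝ) ≤ κ/13 - LG^2*c^2)
        (mul_nonneg (mul_nonneg hh0.le (sq_nonneg c)) hp)]
    nlinarith only [m1, m2]
  -- budget
  have cB : c*((7/8)*τ*s*(c^2*al + (1/2)*(1-2*τ)^2*p + c^2*r))
      ≤ (7/128)*(h*c^2)*al + (7/96)*(h*c^2)*(κ*p) + (7/128)*(h*c^2)*r := by
    have b1 : c*((7/8)*τ*s*(c^2*al)) ≤ (7/128)*(h*c^2)*al := by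
      rw [hsc]
      nlinarith only [mul_nonneg (sub_nonneg.2 hτ1) (mul_nonneg (by positivity : (0:ℝ) ≤ s*c^3) hal0)]
    have b2 : c*((7/8)*τ*s*((1/2)*(1-2*τ)^2*p)) ≤ (7/96)*(h*c^2)*(κ*p) := by
      rw [hsc]
      nlinarith only [mul_nonneg (sub_nonneg.2 hτ2) (mul_nonneg (mul_nonneg hs0.le hc0.le) hp),
        mul_nonneg (by nlinarith only [hb0, hb1] : (0:ℝ) ≤ 1 - (1-2*τ)^2)
          (mul_nonneg (mul_nonneg hτ0.le (mul_nonneg hs0.le hc0.le)) hp), hτ0, hs0, hc0, hp]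
    have b3 : c*((7/8)*τ*s*(c^2*r)) ≤ (7/128)*(h*c^2)*r := by
      rw [hsc]
      nlinarith only [mul_nonneg (sub_nonneg.2 hτ1) (mul_nonneg (by positivity : (0:ℝ) ≤ s*c^3) hr)]
    nlinarith only [b1, b2, b3]
  -- conversion facts for the final tally
  have hAl : (h*c^2)*(κ*p) ≤ (h*c^2)*al := by
    nlinarith only [mul_nonneg (mul_nonneg hh0.le (sq_nonneg c)) (sub_nonneg.2 hal1)]
  have hP0 : (0:ℝ) ≤ (h*c^2)*(κ*p) := by positivity
  have hR0 : (0:ℝ) ≤ (h*c^2)*r := by positivity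
  -- case analysis on g1
  rcases hcase with hg1p | hg1c
  · have cS9 : c*(-((1-2*τ)*(ψ*c)*h)*g1) ≤ 0 := by
      nlinarith only [mul_nonneg (mul_nonneg (mul_nonneg (mul_nonneg hb0.le hψ0.le) (sq_nonneg c)) hh0.le) hg1p]
    have main : c*(c^2*(al + 2*a*be - 2*a*h*zKd + a^2*rho - 2*a^2*h*wKd + a^2*h^2*dKd)
        + (1/2)*((1-2*τ)^2*p + 2*(1-2*τ)*(ψ*c)*q - 2*(1-2*τ)*(ψ*c)*h*(al+g1)
            + (ψ*c)^2*r - 2*(ψ*c)^2*h*(be+g2) + (ψ*c)^2*h^2*dd)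
        + (1/2)*c^2*(η^2*r - 2*η^2*h*(be+g2) + η^2*h^2*dd))
        ≤ c*((1 - 7/8*τ*s) * (c^2*al + (1/2)*(1-2*τ)^2*p + (1-2*τ)*c*q + c^2*r)) := by
      linarith only [cS1, cS2, cS3, cS4, cS5, cS6, cS7, cS8, cS9, cS10, cS11, cB, hAl, hP0, hR0]
    exact le_of_mul_le_mul_left main hc0
  · obtain ⟨hpre2, hpR2⟩ := hg1c
    have k1 : -g1 ≤ LG*R^2 := by
      nlinarith only [hg1B, mul_nonneg hLG0.le (sub_nonneg.2 hpR2)]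
    have hbψ1 : (1-2*τ)*ψ ≤ 1 := by nlinarith only [hτ0, hψ1, hψ0, hb0, hb1]
    have k2 : c*(-((1-2*τ)*(ψ*c)*h)*g1) ≤ c^2*h*(LG*R^2) := by
      nlinarith only [mul_nonneg (mul_nonneg (mul_nonneg hb0.le hψ0.le) (mul_nonneg (sq_nonneg c) hh0.le))
        (by linarith only [k1] : (0:ℝ) ≤ LG*R^2 + g1),
        mul_nonneg (sub_nonneg.2 hbψ1) (mul_nonneg (mul_nonneg (sq_nonneg c) hh0.le)
          (mul_nonneg hLG0.le (sq_nonneg R)))]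
    have k3 : c^2*h*(LG*R^2) ≤ τ*h*(c^2*al + (1/2)*(1-2*τ)^2*p + (1-2*τ)*c*q + c^2*r) := by
      nlinarith only [mul_nonneg hh0.le (sub_nonneg.2 hpre2)]
    have k4 : τ*h*(c^2*al + (1/2)*(1-2*τ)^2*p + (1-2*τ)*c*q + c^2*r)
        ≤ (1/16)*(h*c^2)*al + (1/6)*(h*c^2)*(κ*p) + (3/32)*(h*c^2)*r := by
      have k4a : τ*h*(c^2*al) ≤ (1/16)*(h*c^2)*al := by
        nlinarith only [mul_nonneg (sub_nonneg.2 hτ1) (mul_nonneg (mul_nonneg hh0.le (sq_nonneg c)) hal0)]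
      have k4b : τ*h*((1/2)*(1-2*τ)^2*p) ≤ (1/12)*(h*c^2)*(κ*p) := by
        nlinarith only [mul_nonneg (sub_nonneg.2 hτ2) (mul_nonneg hh0.le hp),
          mul_nonneg (by nlinarith only [hb0, hb1] : (0:ℝ) ≤ 1 - (1-2*τ)^2)
            (mul_nonneg (mul_nonneg hτ0.le hh0.le) hp)]
      have k4c : τ*h*((1-2*τ)*c*q) ≤ (1/12)*(h*c^2)*(κ*p) + (1/32)*(h*c^2)*r := by
        have j1 : τ*h*((1-2*τ)*c*q) ≤ (1/2)*τ*h*(1-2*τ)*(p + c^2*r) := by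
          nlinarith only [mul_nonneg (mul_nonneg (mul_nonneg hτ0.le hh0.le) hb0.le)
            (by linarith only [hqB.2] : (0:ℝ) ≤ p + c^2*r - 2*(c*q))]
        have j2 : (1/2)*τ*h*(1-2*τ)*(p + c^2*r) ≤ (1/2)*τ*h*(p + c^2*r) := by
          nlinarith only [mul_nonneg (mul_nonneg (mul_nonneg hτ0.le hh0.le) (by linarith only [hτ0] : (0:ℝ) ≤ 2*τ))
            (add_nonneg hp (mul_nonneg (sq_nonneg c) hr))]
        have j3 : (1/2)*τ*h*(p + c^2*r) ≤ (1/12)*(h*c^2)*(κ*p) + (1/32)*(h*c^2)*r := by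
          nlinarith only [mul_nonneg (sub_nonneg.2 hτ2) (mul_nonneg hh0.le hp),
            mul_nonneg (sub_nonneg.2 hτ1) (mul_nonneg (mul_nonneg hh0.le (sq_nonneg c)) hr)]
        linarith only [j1, j2, j3]
      have k4d : τ*h*(c^2*r) ≤ (1/16)*(h*c^2)*r := by
        nlinarith only [mul_nonneg (sub_nonneg.2 hτ1) (mul_nonneg (mul_nonneg hh0.le (sq_nonneg c)) hr)]
      linarith only [k4a, k4b, k4c, k4d]
    have cS9 : c*(-((1-2*τ)*(ψ*c)*h)*g1)
        ≤ (1/16)*(h*c^2)*al + (1/6)*(h*c^2)*(κ*p) + (3/32)*(h*c^2)*r := by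
      linarith only [k2, k3, k4]
    have main : c*(c^2*(al + 2*a*be - 2*a*h*zKd + a^2*rho - 2*a^2*h*wKd + a^2*h^2*dKd)
        + (1/2)*((1-2*τ)^2*p + 2*(1-2*τ)*(ψ*c)*q - 2*(1-2*τ)*(ψ*c)*h*(al+g1)
            + (ψ*c)^2*r - 2*(ψ*c)^2*h*(be+g2) + (ψ*c)^2*h^2*dd)
        + (1/2)*c^2*(η^2*r - 2*η^2*h*(be+g2) + η^2*h^2*dd))
        ≤ c*((1 - 7/8*τ*s) * (c^2*al + (1/2)*(1-2*τ)^2*p + (1-2*τ)*c*q + c^2*r)) := by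
      linarith only [cS1, cS2, cS3, cS4, cS5, cS6, cS7, cS8, cS9, cS10, cS11, cB, hAl, hP0, hR0]
    exact le_of_mul_le_mul_left main hc0


/-- Contraction for the synchronously coupled BU scheme at large distances,
measured in the twisted norm `r_l`. -/
theorem stmt11 {d : ℕ} (K : Matrix (Fin d) (Fin d) ℝ)
    (gG : (Fin d → ℝ) → (Fin d → ℝ))
    (κ LK LG R γ h : ℝ)
    (hκ : 0 < κ) (hγ : 0 < γ) (hh : 0 < h) (hR : 0 ≤ R) (hLG : 0 < LG)
    (hsymm : K.IsSymm)
    (hKlo : ∀ x : Fin d → ℝ, κ * (x ⬝ᵥ x) ≤ x ⬝ᵥ (K *ᵥ x))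
    (hKhi : ∀ x : Fin d → ℝ, x ⬝ᵥ (K *ᵥ x) ≤ LK * (x ⬝ᵥ x))
    (hGmono : ∀ x y : Fin d → ℝ, R ^ 2 < (x - y) ⬝ᵥ (x - y) →
      (0 : ℝ) ≤ (gG x - gG y) ⬝ᵥ (x - y))
    (hGlip : ∀ x y : Fin d → ℝ,
      (gG x - gG y) ⬝ᵥ (gG x - gG y) ≤ LG ^ 2 * ((x - y) ⬝ᵥ (x - y)))
    (hhsmall : h < min (γ / (55 * LK)) (1 / (15 * γ)))
    (hγcond : LG / γ ^ 2 ≤ κ / (13 * LG))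
    (X V X' V' : Fin d → ℝ) :
    let τ : ℝ := min (κ / (6 * γ ^ 2)) (1 / 16)
    let gU : (Fin d → ℝ) → (Fin d → ℝ) := fun x => K *ᵥ x + gG x
    let rl2 : (Fin d → ℝ) → (Fin d → ℝ) → ℝ := fun z w =>
      γ⁻¹ * γ⁻¹ * (z ⬝ᵥ (K *ᵥ z))
        + (1 / 2) * (((1 - 2 * τ) • z + γ⁻¹ • w) ⬝ᵥ ((1 - 2 * τ) • z + γ⁻¹ • w))
        + (1 / 2) * γ⁻¹ * γ⁻¹ * (w ⬝ᵥ w)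
    let Z := X - X'
    let W := V - V'
    let η : ℝ := Real.exp (-(γ * h))
    let Z' := Z + ((1 - η) / γ) • W - ((1 - η) / γ * h) • (gU X - gU X')
    let W' := η • W - (h * η) • (gU X - gU X')
    τ⁻¹ * LG * R ^ 2 / γ ^ 2 ≤ rl2 Z W →
    rl2 Z' W' ≤ (1 - 7 / 8 * τ * γ * h) * rl2 Z W := by
  intro τ gU rl2 Z W η Z' W' hpre
  have hτdef : τ = min (κ / (6 * γ ^ 2)) (1/16) := rfl
  have hηdef : η = Real.exp (-(γ * h)) := rfl
  have hZv : Z = X - X' := rfl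
  have hWv : W = V - V' := rfl
  -- basic parameter facts
  have hγ0 : γ ≠ 0 := hγ.ne'
  have hγi : γ * γ⁻¹ = 1 := mul_inv_cancel₀ hγ0
  have hLK0 : 0 < LK := by
    by_contra h2
    push_neg at h2
    have h1 : h < γ / (55 * LK) := lt_of_lt_of_le hhsmall (min_le_left _ _)
    have : γ / (55 * LK) ≤ 0 := div_nonpos_iff.2 (Or.inl ⟨hγ.le, by linarith⟩)
    linarith
  have h1 : h < γ / (55 * LK) := lt_of_lt_of_le hhsmall (min_le_left _ _)
  have h2 : h < 1 / (15 * γ) := lt_of_lt_of_le hhsmall (min_le_right _ _)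
  have hs0 : 0 < γ * h := mul_pos hγ hh
  have hs : γ * h ≤ 1/15 := by
    have := mul_lt_mul_of_pos_left h2 hγ
    rw [show γ * (1/(15*γ)) = 1/15 by field_simp] at this
    linarith
  have hsc : h = (γ*h)*γ⁻¹ := by field_simp
  have hLKb : h*LK*γ⁻¹ ≤ 1/55 := by
    have h3 : h * (55*LK) < γ := (lt_div_iff₀ (by positivity)).1 h1
    have h4 : h*(55*LK)*γ⁻¹ < γ*γ⁻¹ := mul_lt_mul_of_pos_right h3 (inv_pos.2 hγ)
    rw [hγi] at h4
    nlinarith [h4]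
  have hτ0 : 0 < τ := by rw [hτdef]; exact lt_min (by positivity) (by norm_num)
  have hτ1 : τ ≤ 1/16 := by rw [hτdef]; exact min_le_right _ _
  have hτ2 : 6*τ ≤ κ*γ⁻¹^2 := by
    have h5 : τ ≤ κ / (6*γ^2) := by rw [hτdef]; exact min_le_left _ _
    have h6 : κ / (6*γ^2) = (κ*γ⁻¹^2)/6 := by
      rw [inv_pow, div_eq_mul_inv, div_eq_mul_inv, mul_inv, mul_comm (6:ℝ)⁻¹]
      ring
    rw [h6] at h5; linarith
  have hLGκ : 13*(LG^2*γ⁻¹^2) ≤ κ := by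
    have h5 : LG*(13*LG) ≤ κ*γ^2 := (div_le_div_iff₀ (by positivity) (by positivity)).1 hγcond
    have h6 : γ^2*γ⁻¹^2 = 1 := by field_simp
    nlinarith [mul_le_mul_of_nonneg_right h5 (sq_nonneg γ⁻¹), h6]
  have hη1 : 1 - γ*h ≤ η := by
    rw [hηdef]
    have := Real.add_one_le_exp (-(γ*h))
    linarith
  have hη2 : η ≤ 1 - γ*h + (γ*h)^2 := by
    rw [hηdef]
    have e1 : (1:ℝ) + γ*h ≤ Real.exp (γ*h) := by
      have := Real.add_one_le_exp (γ*h); linarith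
    have e2 : Real.exp (-(γ*h)) = (Real.exp (γ*h))⁻¹ := by
      rw [Real.exp_neg]
    rw [e2]
    have e3 : (Real.exp (γ*h))⁻¹ ≤ (1 + γ*h)⁻¹ := by
      apply inv_anti₀ (by positivity) e1
    have e4 : (1 + γ*h)⁻¹ ≤ 1 - γ*h + (γ*h)^2 := by
      rw [inv_le_iff_one_le_mul₀ (by positivity)]
      nlinarith [hs0]
    linarith
  -- vectors
  set Gv := gG X - gG X' with hGv
  set Dv := K *ᵥ Z + Gv with hDv
  have hgU : gU X - gU X' = Dv := by
    show (K *ᵥ X + gG X) - (K *ᵥ X' + gG X') = Dv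
    rw [hDv, hGv, hZv, Matrix.mulVec_sub]
    abel
  have hZ'2 : Z' = Z + ((1-η)/γ) • W - (((1-η)/γ) * h) • Dv := by
    show Z + ((1 - η) / γ) • W - ((1 - η) / γ * h) • (gU X - gU X') = _
    rw [hgU]
  have hW'2 : W' = η • W - (h*η) • Dv := by
    show η • W - (h * η) • (gU X - gU X') = _
    rw [hgU]
  -- scalar abbrevs (raw terms; no set)
  have hsd := symdot K hsymm
  -- key scalar facts
  have hp0 : 0 ≤ Z ⬝ᵥ Z := dotSelfNonneg Z
  have hr0v : 0 ≤ W ⬝ᵥ W := dotSelfNonneg W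
  have hal1 : κ*(Z ⬝ᵥ Z) ≤ Z ⬝ᵥ (K *ᵥ Z) := hKlo Z
  have hal2 : Z ⬝ᵥ (K *ᵥ Z) ≤ LK*(Z ⬝ᵥ Z) := hKhi Z
  have hρ1 : κ*(W ⬝ᵥ W) ≤ W ⬝ᵥ (K *ᵥ W) := hKlo W
  have hρ2 : W ⬝ᵥ (K *ᵥ W) ≤ LK*(W ⬝ᵥ W) := hKhi W
  have hal0 : 0 ≤ Z ⬝ᵥ (K *ᵥ Z) := le_trans (mul_nonneg hκ.le hp0) hal1
  have hρ0 : 0 ≤ W ⬝ᵥ (K *ᵥ W) := le_trans (mul_nonneg hκ.le hr0v) hρ1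
  have hqv : (Z ⬝ᵥ W)^2 ≤ (Z ⬝ᵥ Z)*(W ⬝ᵥ W) := dotCS Z W
  have hbev : (Z ⬝ᵥ (K *ᵥ W))^2 ≤ (Z ⬝ᵥ (K *ᵥ Z))*(W ⬝ᵥ (K *ᵥ W)) := KCS K hsymm κ hκ hKlo Z W
  have hg3v : Gv ⬝ᵥ Gv ≤ LG^2*(Z ⬝ᵥ Z) := by
    have := hGlip X X'
    rw [← hZv, ← hGv] at this
    exact this
  have hg30 : 0 ≤ Gv ⬝ᵥ Gv := dotSelfNonneg Gv
  have hg1v : (Z ⬝ᵥ Gv)^2 ≤ LG^2*(Z ⬝ᵥ Z)^2 := by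
    nlinarith only [dotCS Z Gv, hg3v, hp0, mul_le_mul_of_nonneg_left hg3v hp0]
  have hg2v : (W ⬝ᵥ Gv)^2 ≤ LG^2*((Z ⬝ᵥ Z)*(W ⬝ᵥ W)) := by
    nlinarith only [dotCS W Gv, hg3v, hr0v, mul_le_mul_of_nonneg_left hg3v hr0v]
  have hkk0 : 0 ≤ (K *ᵥ Z) ⬝ᵥ (K *ᵥ Z) := dotSelfNonneg _
  have hkw0 : 0 ≤ (K *ᵥ W) ⬝ᵥ (K *ᵥ W) := dotSelfNonneg _
  have hkk : (K *ᵥ Z) ⬝ᵥ (K *ᵥ Z) ≤ LK*(Z ⬝ᵥ (K *ᵥ Z)) := KmulSelf K hsymm κ LK hκ hKlo hKhi Z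
  have hkw : (K *ᵥ W) ⬝ᵥ (K *ᵥ W) ≤ LK*(W ⬝ᵥ (K *ᵥ W)) := KmulSelf K hsymm κ LK hκ hKlo hKhi W
  have hm1v : ((K *ᵥ Z) ⬝ᵥ Gv)^2 ≤ ((K *ᵥ Z) ⬝ᵥ (K *ᵥ Z))*(Gv ⬝ᵥ Gv) := dotCS _ _
  have hm2v : ((K *ᵥ W) ⬝ᵥ Gv)^2 ≤ ((K *ᵥ W) ⬝ᵥ (K *ᵥ W))*(Gv ⬝ᵥ Gv) := dotCS _ _
  have hkzwv : ((K *ᵥ Z) ⬝ᵥ (K *ᵥ W))^2 ≤ ((K *ᵥ Z) ⬝ᵥ (K *ᵥ Z))*((K *ᵥ W) ⬝ᵥ (K *ᵥ W)) := dotCS _ _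
  -- expansions of Dv quantities
  have hzKdeq : Z ⬝ᵥ (K *ᵥ Dv) = (K *ᵥ Z) ⬝ᵥ (K *ᵥ Z) + (K *ᵥ Z) ⬝ᵥ Gv := by
    rw [hDv, Matrix.mulVec_add, dotProduct_add, hsd Z (K *ᵥ Z), hsd Z Gv,
      dotProduct_comm Gv (K *ᵥ Z)]
  have hwKdeq : W ⬝ᵥ (K *ᵥ Dv) = (K *ᵥ Z) ⬝ᵥ (K *ᵥ W) + (K *ᵥ W) ⬝ᵥ Gv := by
    rw [hDv, Matrix.mulVec_add, dotProduct_add, hsd W (K *ᵥ Z), hsd W Gv,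
      dotProduct_comm Gv (K *ᵥ W)]
  have hzdeq : Z ⬝ᵥ Dv = Z ⬝ᵥ (K *ᵥ Z) + Z ⬝ᵥ Gv := by
    rw [hDv, dotProduct_add]
  have hwdeq : W ⬝ᵥ Dv = Z ⬝ᵥ (K *ᵥ W) + W ⬝ᵥ Gv := by
    rw [hDv, dotProduct_add, hsd W Z]
  have hddeq : Dv ⬝ᵥ Dv = (K *ᵥ Z) ⬝ᵥ (K *ᵥ Z) + 2*((K *ᵥ Z) ⬝ᵥ Gv) + Gv ⬝ᵥ Gv := by
    rw [hDv, dotProduct_add, add_dotProduct, add_dotProduct, dotProduct_comm Gv (K *ᵥ Z)]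
    ring
  -- bounds on Dv quantities
  have hzKdb : -(LG^2*(Z ⬝ᵥ Z)) ≤ 2*(Z ⬝ᵥ (K *ᵥ Dv)) := by
    rw [hzKdeq]
    nlinarith only [hm1v, hkk0, hg30, hg3v, hkk,
      sq_nonneg ((K *ᵥ Z) ⬝ᵥ (K *ᵥ Z) + Gv ⬝ᵥ Gv + 2*((K *ᵥ Z) ⬝ᵥ Gv)),
      sq_nonneg ((K *ᵥ Z) ⬝ᵥ (K *ᵥ Z) - Gv ⬝ᵥ Gv)]
  have h2ckzw : -(((K *ᵥ Z) ⬝ᵥ (K *ᵥ Z)) + γ⁻¹^2*((K *ᵥ W) ⬝ᵥ (K *ᵥ W))) ≤ 2*(γ⁻¹*((K *ᵥ Z) ⬝ᵥ (K *ᵥ W))) := by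
    nlinarith only [hkzwv, hkk0, hkw0, sq_nonneg ((K *ᵥ Z) ⬝ᵥ (K *ᵥ Z) - γ⁻¹^2*((K *ᵥ W) ⬝ᵥ (K *ᵥ W))),
      sq_nonneg ((K *ᵥ Z) ⬝ᵥ (K *ᵥ Z) + γ⁻¹^2*((K *ᵥ W) ⬝ᵥ (K *ᵥ W)) + 2*(γ⁻¹*((K *ᵥ Z) ⬝ᵥ (K *ᵥ W)))),
      mul_nonneg (sq_nonneg γ⁻¹) (sub_nonneg.2 hkzwv),
      add_nonneg hkk0 (mul_nonneg (sq_nonneg γ⁻¹) hkw0)]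
  have h2cm2 : -(γ⁻¹^2*((K *ᵥ W) ⬝ᵥ (K *ᵥ W)) + Gv ⬝ᵥ Gv) ≤ 2*(γ⁻¹*((K *ᵥ W) ⬝ᵥ Gv)) := by
    nlinarith only [hm2v, hkw0, hg30, sq_nonneg (γ⁻¹^2*((K *ᵥ W) ⬝ᵥ (K *ᵥ W)) - Gv ⬝ᵥ Gv),
      sq_nonneg (γ⁻¹^2*((K *ᵥ W) ⬝ᵥ (K *ᵥ W)) + Gv ⬝ᵥ Gv + 2*(γ⁻¹*((K *ᵥ W) ⬝ᵥ Gv))),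
      mul_nonneg (sq_nonneg γ⁻¹) (sub_nonneg.2 hm2v),
      add_nonneg (mul_nonneg (sq_nonneg γ⁻¹) hkw0) hg30]
  have hwKdb : -(LK*(Z ⬝ᵥ (K *ᵥ Z)) + 2*γ⁻¹^2*(LK*(W ⬝ᵥ (K *ᵥ W))) + LG^2*(Z ⬝ᵥ Z))
      ≤ 2*(γ⁻¹*(W ⬝ᵥ (K *ᵥ Dv))) := by
    rw [hwKdeq]
    nlinarith only [h2ckzw, h2cm2, hkk, hg3v, hkw, sq_nonneg γ⁻¹, mul_nonneg (sq_nonneg γ⁻¹) (sub_nonneg.2 hkw)]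
  have hdd0v : 0 ≤ Dv ⬝ᵥ Dv := dotSelfNonneg Dv
  have hddUv : Dv ⬝ᵥ Dv ≤ 2*(LK*(Z ⬝ᵥ (K *ᵥ Z))) + 2*(LG^2*(Z ⬝ᵥ Z)) := by
    rw [hddeq]
    nlinarith only [hm1v, hkk0, hg30, hkk, hg3v,
      sq_nonneg ((K *ᵥ Z) ⬝ᵥ (K *ᵥ Z) + Gv ⬝ᵥ Gv - 2*((K *ᵥ Z) ⬝ᵥ Gv)),
      sq_nonneg ((K *ᵥ Z) ⬝ᵥ (K *ᵥ Z) - Gv ⬝ᵥ Gv)]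
  have hdKd0v : 0 ≤ Dv ⬝ᵥ (K *ᵥ Dv) := le_trans (mul_nonneg hκ.le hdd0v) (hKlo Dv)
  have hdKdUv : Dv ⬝ᵥ (K *ᵥ Dv) ≤ 2*(LK^2*(Z ⬝ᵥ (K *ᵥ Z))) + 2*(LK*(LG^2*(Z ⬝ᵥ Z))) := by
    have := hKhi Dv
    nlinarith only [this, hddUv, hLK0, mul_le_mul_of_nonneg_left hddUv hLK0.le]
  have hr0eq : rl2 Z W = γ⁻¹^2*(Z ⬝ᵥ (K *ᵥ Z)) + (1/2)*(1-2*τ)^2*(Z ⬝ᵥ Z)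
      + (1-2*τ)*γ⁻¹*(Z ⬝ᵥ W) + γ⁻¹^2*(W ⬝ᵥ W) := by
    show γ⁻¹ * γ⁻¹ * (Z ⬝ᵥ (K *ᵥ Z))
      + (1 / 2) * (((1 - 2 * τ) • Z + γ⁻¹ • W) ⬝ᵥ ((1 - 2 * τ) • Z + γ⁻¹ • W))
      + (1 / 2) * γ⁻¹ * γ⁻¹ * (W ⬝ᵥ W) = _
    simp only [dotProduct_add, add_dotProduct, smul_dotProduct, dotProduct_smul, smul_eq_mul]
    rw [dotProduct_comm W Z]
    ring
  -- case hypothesis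
  have hcasev : 0 ≤ Z ⬝ᵥ Gv ∨
      (LG*R^2*γ⁻¹^2 ≤ τ*(γ⁻¹^2*(Z ⬝ᵥ (K *ᵥ Z)) + (1/2)*(1-2*τ)^2*(Z ⬝ᵥ Z)
        + (1-2*τ)*γ⁻¹*(Z ⬝ᵥ W) + γ⁻¹^2*(W ⬝ᵥ W)) ∧ Z ⬝ᵥ Z ≤ R^2) := by
    by_cases hcs : R^2 < Z ⬝ᵥ Z
    · left
      have hmono := hGmono X X'
      rw [← hZv, ← hGv] at hmono
      have := hmono hcs
      rw [dotProduct_comm Z Gv]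
      exact this
    · right
      refine ⟨?_, le_of_not_gt hcs⟩
      rw [hr0eq] at hpre
      have hτi : τ*τ⁻¹ = 1 := mul_inv_cancel₀ hτ0.ne'
      have hmul := mul_le_mul_of_nonneg_left hpre hτ0.le
      rw [show τ*(τ⁻¹ * LG * R^2 / γ^2) = (τ*τ⁻¹)*(LG*R^2*γ⁻¹^2) by
        rw [div_eq_mul_inv, ← inv_pow]; ring] at hmul
      rw [hτi, one_mul] at hmul
      exact hmul
  have hexp : rl2 Z' W' =
      γ⁻¹^2*((Z ⬝ᵥ (K *ᵥ Z)) + 2*((1-η)/γ)*(Z ⬝ᵥ (K *ᵥ W)) - 2*((1-η)/γ)*h*(Z ⬝ᵥ (K *ᵥ Dv))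
        + ((1-η)/γ)^2*(W ⬝ᵥ (K *ᵥ W)) - 2*((1-η)/γ)^2*h*(W ⬝ᵥ (K *ᵥ Dv))
        + ((1-η)/γ)^2*h^2*(Dv ⬝ᵥ (K *ᵥ Dv)))
      + (1/2)*((1-2*τ)^2*(Z ⬝ᵥ Z) + 2*(1-2*τ)*((1 - 2*τ*(1-η))*γ⁻¹)*(Z ⬝ᵥ W)
        - 2*(1-2*τ)*((1 - 2*τ*(1-η))*γ⁻¹)*h*((Z ⬝ᵥ (K *ᵥ Z)) + Z ⬝ᵥ Gv)
        + ((1 - 2*τ*(1-η))*γ⁻¹)^2*(W ⬝ᵥ W)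
        - 2*((1 - 2*τ*(1-η))*γ⁻¹)^2*h*((Z ⬝ᵥ (K *ᵥ W)) + W ⬝ᵥ Gv)
        + ((1 - 2*τ*(1-η))*γ⁻¹)^2*h^2*(Dv ⬝ᵥ Dv))
      + (1/2)*γ⁻¹^2*(η^2*(W ⬝ᵥ W) - 2*η^2*h*((Z ⬝ᵥ (K *ᵥ W)) + W ⬝ᵥ Gv)
        + η^2*h^2*(Dv ⬝ᵥ Dv)) := by
    show γ⁻¹ * γ⁻¹ * (Z' ⬝ᵥ (K *ᵥ Z'))
      + (1/2) * (((1 - 2*τ) • Z' + γ⁻¹ • W') ⬝ᵥ ((1 - 2*τ) • Z' + γ⁻¹ • W'))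
      + (1/2) * γ⁻¹ * γ⁻¹ * (W' ⬝ᵥ W') = _
    rw [hZ'2, hW'2]
    simp only [Matrix.mulVec_add, Matrix.mulVec_sub, Matrix.mulVec_smul, dotProduct_add,
      dotProduct_sub, dotProduct_smul, add_dotProduct, sub_dotProduct, smul_dotProduct,
      smul_eq_mul]
    simp only [hsd W Z, hsd Dv Z, hsd Dv W, dotProduct_comm W Z, dotProduct_comm Dv Z,
      dotProduct_comm Dv W, dotProduct_comm Gv Z, dotProduct_comm Gv W]
    rw [hzdeq, hwdeq]
    field_simp
    ring
  calc rl2 Z' W' = _ := hexp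
    _ ≤ (1 - 7/8*τ*(γ*h)) * (γ⁻¹^2*(Z ⬝ᵥ (K *ᵥ Z)) + (1/2)*(1-2*τ)^2*(Z ⬝ᵥ Z)
        + (1-2*τ)*γ⁻¹*(Z ⬝ᵥ W) + γ⁻¹^2*(W ⬝ᵥ W)) :=
      keyIneq γ⁻¹ (γ*h) h ((1-η)/γ) (1 - 2*τ*(1-η)) η τ κ LK LG R
        (Z ⬝ᵥ Z) (Z ⬝ᵥ W) (W ⬝ᵥ W) (Z ⬝ᵥ (K *ᵥ Z)) (Z ⬝ᵥ (K *ᵥ W)) (W ⬝ᵥ (K *ᵥ W))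
        (Z ⬝ᵥ Gv) (W ⬝ᵥ Gv) (Z ⬝ᵥ (K *ᵥ Dv)) (W ⬝ᵥ (K *ᵥ Dv)) (Dv ⬝ᵥ Dv) (Dv ⬝ᵥ (K *ᵥ Dv))
        (inv_pos.2 hγ) hh hκ hLK0 hLG hs0 hs hsc hLKb hτ0 hτ1 hτ2 hLGκ hη1 hη2
        (div_eq_mul_inv _ _) rfl hp0 hr0v hal1 hal2 hρ1 hρ2 hqv hbev hg1v hg2v
        hzKdb hwKdb hdd0v hddUv hdKd0v hdKdUv hcasev
    _ = (1 - 7/8*τ*γ*h) * rl2 Z W := by rw [hr0eq]; ring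
end

section
/- Let (μ_k) and (ν_k) be the laws of two Markov chains driven by the same kernel π_h, and suppose W_ρ(μπ_h, νπ_h) ≤ (1−ch) W_ρ(μ, ν) for all probability measures μ, ν with 0 < ch < 1, and suppose μ_{h,∞} is invariant and μ_∞ arbitrary. Then W_ρ(μ_∞, μ_{h,∞}) ≤ (1 − (1−ch)^l)^{-1} W_ρ(μ_∞ π^l, μ_∞ π_h^l) for any l ∈ ℕ with l ≥ 1, where π is any kernel leaving μ_∞ invariant. -/
/-!
Write `κ = (1 - c h)^l`. Since `μ_{h,∞}` is fixed by `π_h^l`, which is a `κ`-contraction, the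
triangle inequality through `μ_∞ π_h^l` gives
`W(μ_∞, μ_{h,∞}) ≤ W(μ_∞, μ_∞ π_h^l) + κ W(μ_∞, μ_{h,∞})`, and `μ_∞ = μ_∞ π^l`.
As `κ < 1`, the bias term can be absorbed on the left.
-/

open Function

section Contraction

variable {M : Type*} (W : M → M → ℝ)

theorem iterate_contraction {f : M → M} {q : ℝ} (hq : 0 ≤ q)
    (hf : ∀ a b, W (f a) (f b) ≤ q * W a b) (n : ℕ) (a b : M) :
    W (f^[n] a) (f^[n] b) ≤ q ^ n * W a b := by
  induction n generalizing a b with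
  | zero => simp
  | succ n ih =>
    rw [iterate_succ_apply, iterate_succ_apply, pow_succ, mul_assoc]
    exact (ih _ _).trans (mul_le_mul_of_nonneg_left (hf a b) (pow_nonneg hq n))

theorem one_sub_mul_le_of_isFixedPt (htri : ∀ a b c, W a c ≤ W a b + W b c)
    {g : M → M} {κ : ℝ} (hg : ∀ a b, W (g a) (g b) ≤ κ * W a b) {x : M} (hx : IsFixedPt g x)
    (y : M) : (1 - κ) * W y x ≤ W y (g y) := by
  have h_tri := htri y (g y) x
  have h_contr := hg y x
  rw [hx.eq] at h_contr
  linarith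

end Contraction

theorem stmt15_general {M : Type*} (W : M → M → ℝ)
    (htri : ∀ a b c, W a c ≤ W a b + W b c)
    (πh π : M → M) (c h : ℝ) (hch0 : 0 < c * h) (hch1 : c * h < 1)
    (hcontr : ∀ a b, W (πh a) (πh b) ≤ (1 - c * h) * W a b)
    (μinf μhinf : M) (hinv_h : πh μhinf = μhinf) (hinv : π μinf = μinf)
    (l : ℕ) (hl : 1 ≤ l) :
    W μinf μhinf ≤ (1 - (1 - c * h) ^ l)⁻¹ * W (π^[l] μinf) (πh^[l] μinf) := by
  have hq : 0 ≤ 1 - c * h := by linarith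
  have hκ : (1 - c * h) ^ l < 1 := pow_lt_one₀ hq (by linarith) (by omega)
  have hbias := one_sub_mul_le_of_isFixedPt W htri (iterate_contraction W hq hcontr l)
    (IsFixedPt.iterate hinv_h l) μinf
  rw [(IsFixedPt.iterate hinv l).eq, inv_mul_eq_div, le_div_iff₀ (sub_pos.2 hκ), mul_comm]
  exact hbias

/-- From one-step Wasserstein contraction of the discretization kernel and
invariance of `μ_∞` under the continuous semigroup, the invariant-measure bias
is bounded by the finite-time strong error. -/
theorem stmt15 {M : Type*} (W : M → M → ℝ)
    (hW0 : ∀ a b, 0 ≤ W a b)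
    (htri : ∀ a b c, W a c ≤ W a b + W b c)
    (πh π : M → M) (c h : ℝ) (hch0 : 0 < c * h) (hch1 : c * h < 1)
    (hcontr : ∀ a b, W (πh a) (πh b) ≤ (1 - c * h) * W a b)
    (μinf μhinf : M) (hinv_h : πh μhinf = μhinf) (hinv : π μinf = μinf)
    (l : ℕ) (hl : 1 ≤ l) :
    W μinf μhinf ≤ (1 - (1 - c * h) ^ l)⁻¹ * W (π^[l] μinf) (πh^[l] μinf) :=
  stmt15_general W htri πh π c h hch0 hch1 hcontr μinf μhinf hinv_h hinv l hl
end

section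
/- (UBU one-step expansion bound, BU_{1/2}-step.) Let ∇U be L-Lipschitz, α = 2Lγ^{-2}, and γh ≤ 1. For differences z, q = z + γ^{-1}w of two synchronously coupled copies after a B step of size h followed by a half U step, one has α|z e^{-γh/2} + (1 − e^{-γh/2})q| + |q − hγ^{-1}e^{-γh/2}(∇U(x) − ∇U(x'))| ≤ (1 + αγh/2)(α|z| + |q|), where z = x − x'. -/
/-- One-step expansion bound for the synchronous `BU_{1/2}`-step of the UBU
scheme in the distance `α|z| + |q|`, with `α = 2L/γ²`. -/
theorem stmt18 {d : ℕ} (γ h L : ℝ) (hγ : 0 < γ) (hh : 0 < h) (hL : 0 < L)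
    (hγh : γ * h ≤ 1)
    (gU : EuclideanSpace ℝ (Fin d) → EuclideanSpace ℝ (Fin d))
    (hlip : ∀ x y, ‖gU x - gU y‖ ≤ L * ‖x - y‖)
    (x x' v v' : EuclideanSpace ℝ (Fin d)) :
    let α : ℝ := 2 * L / γ ^ 2
    let z : EuclideanSpace ℝ (Fin d) := x - x'
    let w : EuclideanSpace ℝ (Fin d) := v - v'
    let q : EuclideanSpace ℝ (Fin d) := z + γ⁻¹ • w
    α * ‖Real.exp (-(γ * h) / 2) • z + (1 - Real.exp (-(γ * h) / 2)) • q‖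
        + ‖q - (h * γ⁻¹ * Real.exp (-(γ * h) / 2)) • (gU x - gU x')‖
      ≤ (1 + α * γ * h / 2) * (α * ‖z‖ + ‖q‖) := by
  intro α z w q
  set e := Real.exp (-(γ * h) / 2) with he
  have he0 : 0 < e := Real.exp_pos _
  have he1 : e ≤ 1 := by
    rw [he, Real.exp_le_one_iff]
    nlinarith
  have hexp : Real.exp (γ * h / 2) * e = 1 := by
    rw [he, ← Real.exp_add]; ring_nf; exact Real.exp_zero
  have hkey : (1 + γ * h / 2) * e ≤ 1 := by
    have h1 := Real.add_one_le_exp (γ * h / 2)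
    nlinarith
  have h1e : 1 - e ≤ γ * h / 2 := by
    have h1 := Real.add_one_le_exp (-(γ * h) / 2)
    rw [← he] at h1
    linarith
  have hG : ‖gU x - gU x'‖ ≤ L * ‖z‖ := hlip x x'
  have hα : 0 < α := by positivity
  have hT1 : ‖e • z + (1 - e) • q‖ ≤ e * ‖z‖ + (1 - e) * ‖q‖ := by
    calc ‖e • z + (1 - e) • q‖ ≤ ‖e • z‖ + ‖(1 - e) • q‖ := norm_add_le _ _
    _ = e * ‖z‖ + (1 - e) * ‖q‖ := by
        rw [norm_smul, norm_smul, Real.norm_eq_abs, Real.norm_eq_abs,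
          abs_of_pos he0, abs_of_nonneg (by linarith)]
  have hT2 : ‖q - (h * γ⁻¹ * e) • (gU x - gU x')‖
      ≤ ‖q‖ + (h * γ⁻¹ * e) * (L * ‖z‖) := by
    calc ‖q - (h * γ⁻¹ * e) • (gU x - gU x')‖
        ≤ ‖q‖ + ‖(h * γ⁻¹ * e) • (gU x - gU x')‖ := norm_sub_le _ _
    _ = ‖q‖ + (h * γ⁻¹ * e) * ‖gU x - gU x'‖ := by
        rw [norm_smul, Real.norm_eq_abs, abs_of_pos (by positivity)]
    _ ≤ ‖q‖ + (h * γ⁻¹ * e) * (L * ‖z‖) := by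
        gcongr
  have hcoef : h * γ⁻¹ * e * L = α * γ * h / 2 * e := by
    show h * γ⁻¹ * e * L = 2 * L / γ ^ 2 * γ * h / 2 * e
    field_simp
  have hz := norm_nonneg z
  have hq := norm_nonneg q
  nlinarith [mul_le_mul_of_nonneg_right hT1 hα.le,
    mul_le_mul_of_nonneg_left hkey (mul_nonneg hα.le hz),
    mul_le_mul_of_nonneg_left h1e (mul_nonneg hα.le hq),
    mul_nonneg (mul_nonneg hα.le hα.le) hz, mul_pos hγ hh]
end

section
/- Let A ∈ ℝ^{d×d×d} be a symmetric 3-tensor with ‖A‖_{{1},{2},{3}} := sup{Σ A_{ijk}x_i y_j z_k : |x|,|y|,|z| ≤ 1} and ‖A‖_{{1,2},{3}} := sup{Σ A_{ijk}X_{ij}y_k : ‖X‖_F ≤ 1, |y| ≤ 1}. Then ‖A‖_{{1},{2},{3}} ≤ ‖A‖_{{1,2},{3}} ≤ √d · ‖A‖_{{1},{2},{3}}. -/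
/-! Rank-one matrices `x yᵀ` have Frobenius norm `|x| |y|`, which gives the lower bound.
For the upper bound, contract `A` with `y` to a matrix `M`. Testing `A` against `eᵢ ⊗ w ⊗ y`
shows that every row of `M` has Euclidean norm at most `‖A‖_{{1},{2},{3}}`, and Cauchy–Schwarz,
first along each row and then over the `d` rows, gives `⟨X, M⟩ ≤ √d ‖X‖_F ‖A‖_{{1},{2},{3}}`. -/

open Finset

section TensorNorms

variable {ι κ μ : Type*} [Fintype ι] [Fintype κ] [Fintype μ]

lemma sqrt_sum_sq_le_of_forall_sum_mul_le {v : κ → ℝ} {c : ℝ}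
    (h : ∀ w : κ → ℝ, ∑ j, w j ^ 2 ≤ 1 → ∑ j, v j * w j ≤ c) : √(∑ j, v j ^ 2) ≤ c := by
  rcases (sum_nonneg fun j _ => sq_nonneg (v j)).eq_or_lt with hv | hv
  · rw [← hv, Real.sqrt_zero]
    simpa using h 0 (by simp)
  · convert h (fun j => v j / √(∑ j, v j ^ 2)) ?_ using 1
    · simp_rw [← mul_div_assoc, ← sq, ← sum_div, Real.div_sqrt]
    · simp_rw [div_pow, ← sum_div, Real.sq_sqrt hv.le, div_self hv.ne', le_refl]

lemma abs_le_one_of_sum_sq_le_one {v : κ → ℝ} (hv : ∑ j, v j ^ 2 ≤ 1) (j : κ) : |v j| ≤ 1 :=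
  sq_le_one_iff_abs_le_one _ |>.1 <|
    (single_le_sum (fun j _ => sq_nonneg (v j)) (mem_univ j)).trans hv

lemma sum_sqrt_sum_sq_le (X : ι → κ → ℝ) :
    ∑ i, √(∑ j, X i j ^ 2) ≤ √(Fintype.card ι) * √(∑ i, ∑ j, X i j ^ 2) := by
  simpa using Real.sum_sqrt_mul_sqrt_le univ (f := fun _ => 1) (g := fun i => ∑ j, X i j ^ 2)
    (fun _ => zero_le_one) (fun i => sum_nonneg fun j _ => sq_nonneg _)

lemma sum_sum_mul_le_sqrt_card_mul {X M : ι → κ → ℝ} {c : ℝ} (hc : 0 ≤ c)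
    (hX : ∑ i, ∑ j, X i j ^ 2 ≤ 1) (hM : ∀ i, √(∑ j, M i j ^ 2) ≤ c) :
    ∑ i, ∑ j, X i j * M i j ≤ √(Fintype.card ι) * c :=
  calc ∑ i, ∑ j, X i j * M i j ≤ ∑ i, √(∑ j, X i j ^ 2) * c :=
        sum_le_sum fun i _ => (Real.sum_mul_le_sqrt_mul_sqrt _ _ _).trans <|
          mul_le_mul_of_nonneg_left (hM i) (Real.sqrt_nonneg _)
    _ = (∑ i, √(∑ j, X i j ^ 2)) * c := (sum_mul _ _ _).symm
    _ ≤ (√(Fintype.card ι) * √(∑ i, ∑ j, X i j ^ 2)) * c := by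
        gcongr; exact sum_sqrt_sum_sq_le X
    _ ≤ √(Fintype.card ι) * c := by
        gcongr
        exact mul_le_of_le_one_right (Real.sqrt_nonneg _) (Real.sqrt_le_one.2 hX)

def trilinearValues (A : ι → κ → μ → ℝ) : Set ℝ :=
  {r : ℝ | ∃ (x : ι → ℝ) (y : κ → ℝ) (z : μ → ℝ),
    (∑ i, x i ^ 2) ≤ 1 ∧ (∑ j, y j ^ 2) ≤ 1 ∧ (∑ k, z k ^ 2) ≤ 1 ∧
    r = ∑ i, ∑ j, ∑ k, A i j k * x i * y j * z k}

def matrixVectorValues (A : ι → κ → μ → ℝ) : Set ℝ :=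
  {r : ℝ | ∃ (X : ι → κ → ℝ) (y : μ → ℝ), (∑ i, ∑ j, X i j ^ 2) ≤ 1 ∧ (∑ k, y k ^ 2) ≤ 1 ∧
    r = ∑ i, ∑ j, ∑ k, A i j k * X i j * y k}

variable (A : ι → κ → μ → ℝ)

lemma zero_mem_trilinearValues : (0 : ℝ) ∈ trilinearValues A :=
  ⟨0, 0, 0, by simp, by simp, by simp, by simp⟩

lemma zero_mem_matrixVectorValues : (0 : ℝ) ∈ matrixVectorValues A :=
  ⟨0, 0, by simp, by simp, by simp⟩

lemma trilinearValues_subset_matrixVectorValues : trilinearValues A ⊆ matrixVectorValues A := by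
  rintro r ⟨x, y, z, hx, hy, hz, rfl⟩
  refine ⟨fun i j => x i * y j, z, ?_, hz, by simp only [mul_assoc]⟩
  simp_rw [mul_pow, ← sum_mul_sum]
  exact mul_le_one₀ hx (sum_nonneg fun j _ => sq_nonneg _) hy

lemma bddAbove_matrixVectorValues : BddAbove (matrixVectorValues A) := by
  refine ⟨∑ i, ∑ j, ∑ k, |A i j k|, ?_⟩
  rintro r ⟨X, y, hX, hy, rfl⟩
  have hXi : ∀ i, ∑ j, X i j ^ 2 ≤ 1 := fun i =>
    (single_le_sum (fun i _ => sum_nonneg fun j _ => sq_nonneg (X i j)) (mem_univ i)).trans hX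
  gcongr with i _ j _ k _
  calc A i j k * X i j * y k ≤ |A i j k * X i j * y k| := le_abs_self _
    _ = |A i j k| * |X i j| * |y k| := by rw [abs_mul, abs_mul]
    _ ≤ |A i j k| * 1 * 1 := by
        gcongr
        exacts [abs_le_one_of_sum_sq_le_one (hXi i) j, abs_le_one_of_sum_sq_le_one hy k]
    _ = |A i j k| := by ring

lemma bddAbove_trilinearValues : BddAbove (trilinearValues A) :=
  (bddAbove_matrixVectorValues A).mono (trilinearValues_subset_matrixVectorValues A)

lemma sSup_trilinearValues_nonneg : 0 ≤ sSup (trilinearValues A) :=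
  le_csSup (bddAbove_trilinearValues A) (zero_mem_trilinearValues A)

lemma sSup_trilinearValues_le_sSup_matrixVectorValues :
    sSup (trilinearValues A) ≤ sSup (matrixVectorValues A) :=
  csSup_le_csSup (bddAbove_matrixVectorValues A) ⟨0, zero_mem_trilinearValues A⟩
    (trilinearValues_subset_matrixVectorValues A)

lemma sqrt_sum_sq_sum_mul_le_sSup_trilinearValues {y : μ → ℝ} (hy : ∑ k, y k ^ 2 ≤ 1) (i : ι) :
    √(∑ j, (∑ k, A i j k * y k) ^ 2) ≤ sSup (trilinearValues A) := by
  classical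
  refine sqrt_sum_sq_le_of_forall_sum_mul_le fun w hw => le_csSup (bddAbove_trilinearValues A)
    ⟨Pi.single i 1, w, y, by simp [Pi.single_apply], hw, hy, ?_⟩
  simp [Pi.single_apply, sum_mul, mul_right_comm]

lemma sSup_matrixVectorValues_le_sqrt_card_mul :
    sSup (matrixVectorValues A) ≤ √(Fintype.card ι) * sSup (trilinearValues A) := by
  refine csSup_le ⟨0, zero_mem_matrixVectorValues A⟩ ?_
  rintro r ⟨X, y, hX, hy, rfl⟩
  refine le_of_eq_of_le ?_ (sum_sum_mul_le_sqrt_card_mul (sSup_trilinearValues_nonneg A) hX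
    (sqrt_sum_sq_sum_mul_le_sSup_trilinearValues A hy))
  simp only [mul_sum, mul_assoc, mul_left_comm (X _ _)]

end TensorNorms

theorem stmt19_general {d : ℕ} (A : Fin d → Fin d → Fin d → ℝ) :
    let n123 : ℝ := sSup {r : ℝ | ∃ x y z : Fin d → ℝ,
      (∑ i, x i ^ 2) ≤ 1 ∧ (∑ j, y j ^ 2) ≤ 1 ∧ (∑ k, z k ^ 2) ≤ 1 ∧
      r = ∑ i, ∑ j, ∑ k, A i j k * x i * y j * z k}
    let n12_3 : ℝ := sSup {r : ℝ | ∃ (X : Fin d → Fin d → ℝ) (y : Fin d → ℝ),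
      (∑ i, ∑ j, X i j ^ 2) ≤ 1 ∧ (∑ k, y k ^ 2) ≤ 1 ∧
      r = ∑ i, ∑ j, ∑ k, A i j k * X i j * y k}
    n123 ≤ n12_3 ∧ n12_3 ≤ Real.sqrt d * n123 := by
  have h := sSup_matrixVectorValues_le_sqrt_card_mul A
  rw [Fintype.card_fin] at h
  exact ⟨sSup_trilinearValues_le_sSup_matrixVectorValues A, h⟩

/-- Comparison of the tensor norms `‖·‖_{{1},{2},{3}}` and `‖·‖_{{1,2},{3}}`
for a symmetric 3-tensor: `‖A‖_{{1},{2},{3}} ≤ ‖A‖_{{1,2},{3}} ≤ √d ‖A‖_{{1},{2},{3}}`. -/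
theorem stmt19 {d : ℕ} (A : Fin d → Fin d → Fin d → ℝ)
    (hsymm : ∀ i j k, A i j k = A j i k ∧ A i j k = A i k j) :
    let n123 : ℝ := sSup {r : ℝ | ∃ x y z : Fin d → ℝ,
      (∑ i, x i ^ 2) ≤ 1 ∧ (∑ j, y j ^ 2) ≤ 1 ∧ (∑ k, z k ^ 2) ≤ 1 ∧
      r = ∑ i, ∑ j, ∑ k, A i j k * x i * y j * z k}
    let n12_3 : ℝ := sSup {r : ℝ | ∃ (X : Fin d → Fin d → ℝ) (y : Fin d → ℝ),
      (∑ i, ∑ j, X i j ^ 2) ≤ 1 ∧ (∑ k, y k ^ 2) ≤ 1 ∧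
      r = ∑ i, ∑ j, ∑ k, A i j k * X i j * y k}
    n123 ≤ n12_3 ∧ n12_3 ≤ Real.sqrt d * n123 :=
  stmt19_general A
end
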